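/- arXiv:1002.2864 — 3 statements merged into one kernel-verified Lean document; each statement's English description precedes it below -/
import Mathlib

section
/- (Ruloid Theorem) Let G be a GSOS language and X ⊆ Var a finite set of variables. For each context D[x⃗] over Σ_G and each action c, there exists a finite set R_{D,c} of ruloids with conclusions of the form D[x⃗] →^c C[x⃗,y⃗] such that (1) every ruloid in R_{D,c} is sound for →_G and the set R_{D,c} is supporting for D[x⃗] and c, and (2) for every ρ ∈ R_{D,c}, the set of target variables of ρ is disjoint from X. -/
/-!
Common infrastructure for formalizing results about GSOS languages
("A rule-matching bisimulation method", Aceto et al.).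

* Variables are natural numbers (a countably infinite set).
* Terms over a signature given by a type `Op` of operation symbols with
  arities `ar : Op → ℕ`.
* GSOS rules and ruloids, the induced (sound and supported) transition
  relation, bisimilarity, ruloid systems, valid ruloids, initial transition
  formulae and rule-matching bisimulation.
-/

namespace GSOSPaper

/-- Terms over operation symbols `Op` with arity function `ar`;
variables are natural numbers. -/
inductive Tm (Op : Type) (ar : Op → ℕ) : Type
  | var : ℕ → Tm Op ar
  | app : (f : Op) → (Fin (ar f) → Tm Op ar) → Tm Op ar

namespace Tm

variable {Op : Type} {ar : Op → ℕ}

/-- The set of variables occurring in a term. -/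
def vars : Tm Op ar → Set ℕ
  | .var x => {x}
  | .app _ ts => ⋃ i, (ts i).vars

/-- The set of operation symbols occurring in a term. -/
def ops : Tm Op ar → Set Op
  | .var _ => ∅
  | .app f ts => insert f (⋃ i, (ts i).ops)

/-- A term is closed if it contains no variables. -/
def IsClosed (t : Tm Op ar) : Prop := t.vars = ∅

/-- Applying a substitution to a term. -/
def subst (σ : ℕ → Tm Op ar) : Tm Op ar → Tm Op ar
  | .var x => σ x
  | .app f ts => .app f fun i => (ts i).subst σ

/-- Renaming the variables of a term. -/
def rename (r : ℕ → ℕ) (t : Tm Op ar) : Tm Op ar :=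
  t.subst fun x => .var (r x)

/-- The number of occurrences of the variable `v` in a term. -/
def count (v : ℕ) : Tm Op ar → ℕ
  | .var x => if x = v then 1 else 0
  | .app _ ts => ∑ i, (ts i).count v

/-- Transporting a term along an arity-preserving map of operation symbols. -/
def map {Op' : Type} {ar' : Op' → ℕ} (ι : Op → Op') (h : ∀ f, ar' (ι f) = ar f) :
    Tm Op ar → Tm Op' ar'
  | .var x => .var x
  | .app f ts => .app (ι f) fun i => (ts (Fin.cast (h f) i)).map ι h

end Tm

/-- A closed `S`-substitution: every variable is sent to a closed term all of
whose operation symbols come from `S`. -/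
def ClosedSub {Op : Type} {ar : Op → ℕ} (S : Set Op) (σ : ℕ → Tm Op ar) : Prop :=
  ∀ x, (σ x).IsClosed ∧ (σ x).ops ⊆ S

/-- A rule (this data type is used both for GSOS rules and for ruloids):
positive premises `x →^a y` (coded as `(x, a, y)`), negative premises
`x ↛^a` (coded as `(x, a)`), a source term, an action, and a target term. -/
structure Rule (Op : Type) (ar : Op → ℕ) (Act : Type) where
  pos : Set (ℕ × Act × ℕ)
  neg : Set (ℕ × Act)
  src : Tm Op ar
  act : Act
  tgt : Tm Op ar

namespace Rule

variable {Op : Type} {ar : Op → ℕ} {Act : Type}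

/-- The source variables of a rule/ruloid: the variables of its source. -/
def sourceVars (ρ : Rule Op ar Act) : Set ℕ := ρ.src.vars

/-- The target variables of a rule/ruloid: the right-hand sides of its
positive premises. -/
def targetVars (ρ : Rule Op ar Act) : Set ℕ := {y | ∃ x a, (x, a, y) ∈ ρ.pos}

/-- Well-formedness of a rule/ruloid: finitely many premises; the left-hand
sides of premises are source variables; the target variables are distinct
from the source variables and pairwise distinct (each target variable occurs
in exactly one positive premise); the variables of the target of the
conclusion occur among the source and target variables. -/
def WF (ρ : Rule Op ar Act) : Prop :=
  ρ.pos.Finite ∧ ρ.neg.Finite ∧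
  (∀ ⦃x a y⦄, (x, a, y) ∈ ρ.pos → x ∈ ρ.sourceVars ∧ y ∉ ρ.sourceVars) ∧
  (∀ ⦃x a⦄, (x, a) ∈ ρ.neg → x ∈ ρ.sourceVars) ∧
  (∀ ⦃x a y x' a'⦄, (x, a, y) ∈ ρ.pos → (x', a', y) ∈ ρ.pos → x = x' ∧ a = a') ∧
  ρ.tgt.vars ⊆ ρ.sourceVars ∪ ρ.targetVars

/-- A rule is in GSOS format if it is well formed and its source is
`f(x₁, …, x_l)` for an operation symbol `f` and distinct variables `x_i`. -/
def IsGSOSForm (ρ : Rule Op ar Act) : Prop :=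
  ρ.WF ∧ ∃ (f : Op) (x : Fin (ar f) → ℕ), Function.Injective x ∧
    ρ.src = Tm.app f fun i => Tm.var (x i)

/-- A rule is a de Simone rule if it has no negative premises, at most one
positive premise per source variable, a target in which every variable occurs
at most once, and a target containing no source variable that occurs in a
positive premise. -/
def IsDeSimone (ρ : Rule Op ar Act) : Prop :=
  ρ.neg = ∅ ∧
  (∀ ⦃x a y a' y'⦄, (x, a, y) ∈ ρ.pos → (x, a', y') ∈ ρ.pos → a = a' ∧ y = y') ∧
  (∀ v, ρ.tgt.count v ≤ 1) ∧
  (∀ ⦃x a y⦄, (x, a, y) ∈ ρ.pos → x ∉ ρ.tgt.vars)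

/-- `ρ` has principal operation `f`. -/
def PrincipalIs (ρ : Rule Op ar Act) (f : Op) : Prop := ∃ ts, ρ.src = Tm.app f ts

/-- A rule is non-inheriting if no source variable occurs in the target of
its conclusion. -/
def NonInheriting (ρ : Rule Op ar Act) : Prop := ∀ x ∈ ρ.sourceVars, x ∉ ρ.tgt.vars

/-- Renaming the variables of a rule/ruloid. -/
def rename (r : ℕ → ℕ) (ρ : Rule Op ar Act) : Rule Op ar Act where
  pos := (fun p : ℕ × Act × ℕ => (r p.1, p.2.1, r p.2.2)) '' ρ.pos
  neg := (fun p : ℕ × Act => (r p.1, p.2)) '' ρ.neg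
  src := ρ.src.rename r
  act := ρ.act
  tgt := ρ.tgt.rename r

/-- Transporting a rule along an arity-preserving map of operation symbols. -/
def map {Op' : Type} {ar' : Op' → ℕ} (ι : Op → Op') (h : ∀ f, ar' (ι f) = ar f)
    (ρ : Rule Op ar Act) : Rule Op' ar' Act where
  pos := ρ.pos
  neg := ρ.neg
  src := ρ.src.map ι h
  act := ρ.act
  tgt := ρ.tgt.map ι h

end Rule

/-- A language: a set of operation symbols together with a set of rules.
(Well-formedness is the separate predicate `Lang.WellFormed`.) -/
structure Lang (Op : Type) (ar : Op → ℕ) (Act : Type) where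
  ops : Set Op
  rules : Set (Rule Op ar Act)

/-- A GSOS language: finitely many operations, finitely many rules, and all
rules in GSOS format over the signature. -/
def Lang.WellFormed {Op : Type} {ar : Op → ℕ} {Act : Type} (L : Lang Op ar Act) : Prop :=
  L.ops.Finite ∧ L.rules.Finite ∧
  ∀ ρ ∈ L.rules, ρ.IsGSOSForm ∧ ρ.src.ops ⊆ L.ops ∧ ρ.tgt.ops ⊆ L.ops

variable {Op : Type} {ar : Op → ℕ} {Act : Type}

/-- `σ` satisfies the antecedents of `ρ` with respect to the transition
relation `Tr`. -/
def Satisfies (Tr : Tm Op ar → Act → Tm Op ar → Prop) (σ : ℕ → Tm Op ar)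
    (ρ : Rule Op ar Act) : Prop :=
  (∀ ⦃x a y⦄, (x, a, y) ∈ ρ.pos → Tr (σ x) a (σ y)) ∧
  (∀ ⦃x a⦄, (x, a) ∈ ρ.neg → ∀ q, ¬ Tr (σ x) a q)

/-- A rule/ruloid is sound for `Tr` (relative to closed `S`-substitutions) if
every closed substitution satisfying its antecedents yields an instance of
its conclusion that is in `Tr`. -/
def Rule.Sound (Tr : Tm Op ar → Act → Tm Op ar → Prop) (S : Set Op)
    (ρ : Rule Op ar Act) : Prop :=
  ∀ σ, ClosedSub S σ → Satisfies Tr σ ρ →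
    Tr (ρ.src.subst σ) ρ.act (ρ.tgt.subst σ)

/-- The rule/ruloid `ρ` supports the transition `p →^a q`. -/
def Supports (Tr : Tm Op ar → Act → Tm Op ar → Prop) (S : Set Op)
    (ρ : Rule Op ar Act) (p : Tm Op ar) (a : Act) (q : Tm Op ar) : Prop :=
  ∃ σ, ClosedSub S σ ∧ Satisfies Tr σ ρ ∧
    ρ.src.subst σ = p ∧ ρ.act = a ∧ ρ.tgt.subst σ = q

/-- `Tr` is the transition relation induced by the language `L`: it is sound
(every rule instance with satisfied antecedents is a transition) and
supported (every transition is supported by some rule of `L`).  For a GSOS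
language there is a unique such relation. -/
def IsTransRel (L : Lang Op ar Act) (Tr : Tm Op ar → Act → Tm Op ar → Prop) : Prop :=
  (∀ ρ ∈ L.rules, ρ.Sound Tr L.ops) ∧
  (∀ p a q, Tr p a q → ∃ ρ ∈ L.rules, Supports Tr L.ops ρ p a q)

/-- A rule is junk if it supports no transition. -/
def IsJunk (L : Lang Op ar Act) (Tr : Tm Op ar → Act → Tm Op ar → Prop)
    (ρ : Rule Op ar Act) : Prop :=
  ∀ p a q, ¬ Supports Tr L.ops ρ p a q

/-- `R` is a bisimulation with respect to `Tr`. -/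
def IsBisim (Tr : Tm Op ar → Act → Tm Op ar → Prop)
    (R : Tm Op ar → Tm Op ar → Prop) : Prop :=
  Symmetric R ∧ ∀ p q, R p q → ∀ a p', Tr p a p' → ∃ q', Tr q a q' ∧ R p' q'

/-- Bisimilarity with respect to `Tr`. -/
def Bisim (Tr : Tm Op ar → Act → Tm Op ar → Prop) (p q : Tm Op ar) : Prop :=
  ∃ R, IsBisim Tr R ∧ R p q

/-- `ρ` is a ruloid for the context `D` (over the operations `S`). -/
def IsRuloidFor (S : Set Op) (ρ : Rule Op ar Act) (D : Tm Op ar) : Prop :=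
  ρ.WF ∧ ρ.src = D ∧ ρ.tgt.ops ⊆ S

/-- A set `R` of ruloids is supporting for the context `D` and the action `c`:
whenever a closed instance of `D` has a `c`-transition, that transition is an
instance of the conclusion of a ruloid of `R` under a closed substitution
satisfying its antecedents. -/
def SupportingFor (Tr : Tm Op ar → Act → Tm Op ar → Prop) (S : Set Op)
    (R : Set (Rule Op ar Act)) (D : Tm Op ar) (c : Act) : Prop :=
  ∀ σ₀ q, ClosedSub S σ₀ → Tr (D.subst σ₀) c q →
    ∃ ρ ∈ R, ∃ σ, ClosedSub S σ ∧ Satisfies Tr σ ρ ∧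
      ρ.src.subst σ = D.subst σ₀ ∧ ρ.act = c ∧ ρ.tgt.subst σ = q

/-- `rul` assigns to each term `P` a finite set `rul P` of ruloids for `P`
that is sound and supporting for `P` and each action (such an assignment
exists by the Ruloid Theorem). -/
def IsRuloidSystem (L : Lang Op ar Act) (Tr : Tm Op ar → Act → Tm Op ar → Prop)
    (rul : Tm Op ar → Set (Rule Op ar Act)) : Prop :=
  ∀ P : Tm Op ar,
    (rul P).Finite ∧
    (∀ ρ ∈ rul P, IsRuloidFor L.ops ρ P) ∧
    (∀ ρ ∈ rul P, ρ.Sound Tr L.ops) ∧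
    (∀ c : Act, SupportingFor Tr L.ops {ρ | ρ ∈ rul P ∧ ρ.act = c} P c)

/-- The ruloid system `rul` is junk-free: every ruloid in it supports some
transition, i.e. its antecedents are satisfiable by a closed substitution. -/
def JunkFree (L : Lang Op ar Act) (Tr : Tm Op ar → Act → Tm Op ar → Prop)
    (rul : Tm Op ar → Set (Rule Op ar Act)) : Prop :=
  ∀ P, ∀ ρ ∈ rul P, ∃ σ, ClosedSub L.ops σ ∧ Satisfies Tr σ ρ

/-- `ρ` is a valid ruloid for `P`: it is obtained from a ruloid `ρ' ∈ rul P`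
by an injective renaming of its target variables to variables that are not
among the source variables of `ρ`. -/
def IsValidRuloid (rul : Tm Op ar → Set (Rule Op ar Act)) (P : Tm Op ar)
    (ρ : Rule Op ar Act) : Prop :=
  ∃ ρ' ∈ rul P, ∃ r : ℕ → ℕ,
    (∀ x, x ∉ ρ'.targetVars → r x = x) ∧
    Set.InjOn r ρ'.targetVars ∧
    (∀ y ∈ ρ'.targetVars, r y ∉ ρ.sourceVars) ∧
    ρ = ρ'.rename r

/-- `σ` satisfies `hyps(ρ)`, the conjunction of the initial transition
formulae corresponding to the antecedents of `ρ` (the atom `x →^a` for a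
positive premise `x →^a y`, and its negation for a negative premise). -/
def HypsSat (Tr : Tm Op ar → Act → Tm Op ar → Prop) (σ : ℕ → Tm Op ar)
    (ρ : Rule Op ar Act) : Prop :=
  (∀ ⦃x a y⦄, (x, a, y) ∈ ρ.pos → ∃ q, Tr (σ x) a q) ∧
  (∀ ⦃x a⦄, (x, a) ∈ ρ.neg → ∀ q, ¬ Tr (σ x) a q)

/-- `R` is a rule-matching bisimulation (Definition 5.1). -/
def IsRMBisim (L : Lang Op ar Act) (Tr : Tm Op ar → Act → Tm Op ar → Prop)
    (rul : Tm Op ar → Set (Rule Op ar Act))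
    (R : Tm Op ar → Tm Op ar → Prop) : Prop :=
  Symmetric R ∧
  ∀ P Q, R P Q → ∀ ρ ∈ rul P,
    ∃ J : Set (Rule Op ar Act), J.Finite ∧
      (∀ ρ' ∈ J, IsValidRuloid rul Q ρ') ∧
      (∀ ρ' ∈ J,
        ρ'.act = ρ.act ∧
        R ρ.tgt ρ'.tgt ∧
        (ρ'.targetVars ∪ ρ.targetVars) ∩ (ρ.sourceVars ∪ ρ'.sourceVars) = ∅ ∧
        (∀ y ∈ ρ.targetVars ∩ ρ'.targetVars,
          ∃ x, x ∈ ρ.sourceVars ∩ ρ'.sourceVars ∧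
            ∃ b, (x, b, y) ∈ ρ.pos ∧ (x, b, y) ∈ ρ'.pos)) ∧
      (∀ σ, ClosedSub L.ops σ → HypsSat Tr σ ρ → ∃ ρ' ∈ J, HypsSat Tr σ ρ')

/-- Rule-matching bisimilarity. -/
def RMBisim (L : Lang Op ar Act) (Tr : Tm Op ar → Act → Tm Op ar → Prop)
    (rul : Tm Op ar → Set (Rule Op ar Act)) (P Q : Tm Op ar) : Prop :=
  ∃ R, IsRMBisim L Tr rul R ∧ R P Q

/-- Initial transition formulae: propositional logic over atoms `x →^a`. -/
inductive TF (Act : Type) : Type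
  | tru : TF Act
  | atom : ℕ → Act → TF Act
  | not : TF Act → TF Act
  | and : TF Act → TF Act → TF Act

/-- Satisfaction of an initial transition formula by a substitution. -/
def TF.Sat (Tr : Tm Op ar → Act → Tm Op ar → Prop) (σ : ℕ → Tm Op ar) :
    TF Act → Prop
  | .tru => True
  | .atom x a => ∃ q, Tr (σ x) a q
  | .not F => ¬ TF.Sat Tr σ F
  | .and F F' => TF.Sat Tr σ F ∧ TF.Sat Tr σ F'

/-- Semantic entailment `⊨ F ⇒ F'` over closed `S`-substitutions. -/
def Entails (S : Set Op) (Tr : Tm Op ar → Act → Tm Op ar → Prop)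
    (F F' : TF Act) : Prop :=
  ∀ σ, ClosedSub S σ → TF.Sat Tr σ F → TF.Sat Tr σ F'

/-- `L'` (over operations `Op'`) is a disjoint extension of `L` (over `Op`),
along the arity-preserving injection `ι`: the signature and rules of `L'`
include those of `L`, and `L'` has no new rules for the operations of `L`. -/
def IsDisjointExtension {Op' : Type} {ar' : Op' → ℕ} (ι : Op → Op')
    (h : ∀ f, ar' (ι f) = ar f) (L' : Lang Op' ar' Act) (L : Lang Op ar Act) : Prop :=
  Function.Injective ι ∧
  (∀ f ∈ L.ops, ι f ∈ L'.ops) ∧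
  (∀ ρ ∈ L.rules, ρ.map ι h ∈ L'.rules) ∧
  (∀ ρ' ∈ L'.rules, (∃ f ∈ L.ops, ρ'.PrincipalIs (ι f)) → ∃ ρ ∈ L.rules, ρ' = ρ.map ι h)

/-- The term `f(t, u)` for a binary operation symbol `f`. -/
def binT (f : Op) (t u : Tm Op ar) : Tm Op ar :=
  Tm.app f fun i => if (i : ℕ) = 0 then t else u

/-- The term `f` for a constant symbol `f`. -/
def constT (f : Op) : Tm Op ar := Tm.app f fun _ => Tm.var 0

/-- The term `f(t)` for a unary operation symbol `f`. -/
def unT (f : Op) (t : Tm Op ar) : Tm Op ar := Tm.app f fun _ => t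

/-!
By induction on `D`, strengthened so that the target variables of the ruloids lie in an
arbitrary infinite set `V` of variables disjoint from those of `D`. A variable `v` has the
single ruloid `v →^c y / v →^c y`. For `D = f(t⃗)`, each rule `ρ` for `f` with action `c` is
composed with ruloids for the arguments: a positive premise `x_i →^a y` of `ρ` is replaced by
the premises of a ruloid for `t_i` and `a`, drawn from a set whose targets lie in a part of `V`
reserved for that premise, and `y` is replaced by its target. Negative premises are handled
semantically: by the induction hypothesis, whether `t_i σ` has a `b`-transition depends only on
which atoms `x →^a` hold under `σ` for the variables `x` of `t_i`, so a composite fixes the set of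
atoms that hold over the variables of `D`. There are finitely many rules, argument ruloids and
atom sets, hence finitely many composites.
-/

open Function

namespace Tm

theorem vars_subst (σ : ℕ → Tm Op ar) (t : Tm Op ar) :
    (t.subst σ).vars = ⋃ v ∈ t.vars, (σ v).vars := by
  induction t with
  | var x => simp [subst, vars]
  | app f ts ih => simp only [subst, vars, ih, Set.biUnion_iUnion]

theorem vars_finite (t : Tm Op ar) : t.vars.Finite := by
  induction t with
  | var x => exact Set.finite_singleton x
  | app f ts ih => exact Set.finite_iUnion ih

theorem ops_subst_subset (σ : ℕ → Tm Op ar) (t : Tm Op ar) :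
    (t.subst σ).ops ⊆ t.ops ∪ ⋃ v ∈ t.vars, (σ v).ops := by
  induction t with
  | var x => simp [subst, ops, vars]
  | app f ts ih =>
    simp only [subst, ops, vars, Set.biUnion_iUnion, Set.insert_union]
    refine Set.insert_subset_insert (Set.iUnion_subset fun i => (ih i).trans ?_)
    exact Set.union_subset_union (Set.subset_iUnion (fun i => (ts i).ops) i)
      (Set.subset_iUnion (fun i => ⋃ v ∈ (ts i).vars, (σ v).ops) i)

theorem subst_subst (σ σ' : ℕ → Tm Op ar) (t : Tm Op ar) :
    (t.subst σ).subst σ' = t.subst fun v => (σ v).subst σ' := by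
  induction t with
  | var x => rfl
  | app f ts ih => simp only [subst, ih]

theorem subst_congr {σ σ' : ℕ → Tm Op ar} {t : Tm Op ar} (h : Set.EqOn σ σ' t.vars) :
    t.subst σ = t.subst σ' := by
  induction t with
  | var x => exact h rfl
  | app f ts ih =>
    simp only [subst]
    exact congrArg _ (funext fun i => ih i fun v hv => h (Set.mem_iUnion.2 ⟨i, hv⟩))

theorem eqOn_of_subst_eq {σ σ' : ℕ → Tm Op ar} {t : Tm Op ar} (h : t.subst σ = t.subst σ') :
    Set.EqOn σ σ' t.vars := by
  induction t with
  | var x => rintro v rfl; exact h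
  | app f ts ih =>
    simp only [subst, app.injEq, heq_eq_eq, true_and] at h
    intro v hv
    obtain ⟨i, hv⟩ := Set.mem_iUnion.1 hv
    exact ih i (congrFun h i) hv

theorem vars_subset_app {f : Op} (ts : Fin (ar f) → Tm Op ar) (i : Fin (ar f)) :
    (ts i).vars ⊆ (app f ts).vars :=
  Set.subset_iUnion (fun i => (ts i).vars) i

theorem ops_subset_app {f : Op} (ts : Fin (ar f) → Tm Op ar) (i : Fin (ar f)) :
    (ts i).ops ⊆ (app f ts).ops :=
  (Set.subset_iUnion (fun i => (ts i).ops) i).trans (Set.subset_insert _ _)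

theorem vars_app_var {f : Op} (xf : Fin (ar f) → ℕ) :
    (app f fun i => var (xf i) : Tm Op ar).vars = Set.range xf := by
  simp [vars, Set.range]

end Tm

theorem ClosedSub.subst {S : Set Op} {σ : ℕ → Tm Op ar} (hσ : ClosedSub S σ) {t : Tm Op ar}
    (ht : t.ops ⊆ S) : (t.subst σ).IsClosed ∧ (t.subst σ).ops ⊆ S := by
  refine ⟨?_, (t.ops_subst_subset σ).trans (Set.union_subset ht ?_)⟩
  · simp only [Tm.IsClosed, Tm.vars_subst, Set.iUnion_eq_empty]
    exact fun v _ => (hσ v).1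
  · exact Set.iUnion₂_subset fun v _ => (hσ v).2

theorem Lang.WellFormed.wf {L : Lang Op ar Act} (hL : L.WellFormed) {ρ : Rule Op ar Act}
    (hρ : ρ ∈ L.rules) : ρ.WF :=
  (hL.2.2 ρ hρ).1.1

theorem Lang.WellFormed.tgt_ops_subset {L : Lang Op ar Act} (hL : L.WellFormed)
    {ρ : Rule Op ar Act} (hρ : ρ ∈ L.rules) : ρ.tgt.ops ⊆ L.ops :=
  (hL.2.2 ρ hρ).2.2

theorem IsTransRel.closed_of_tr {L : Lang Op ar Act} {Tr : Tm Op ar → Act → Tm Op ar → Prop}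
    (hL : L.WellFormed) (hTr : IsTransRel L Tr) {p q : Tm Op ar} {a : Act} (h : Tr p a q) :
    q.IsClosed ∧ q.ops ⊆ L.ops := by
  obtain ⟨ρ, hρ, σ, hσ, -, -, -, rfl⟩ := hTr.2 p a q h
  exact hσ.subst (hL.tgt_ops_subset hρ)

namespace Rule

variable {ρ : Rule Op ar Act}

theorem WF.mem_sourceVars_of_mem_pos (h : ρ.WF) {x : ℕ} {a : Act} {y : ℕ}
    (hp : (x, a, y) ∈ ρ.pos) : x ∈ ρ.sourceVars :=
  (h.2.2.1 hp).1

theorem WF.mem_sourceVars_of_mem_neg (h : ρ.WF) {x : ℕ} {a : Act} (hn : (x, a) ∈ ρ.neg) :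
    x ∈ ρ.sourceVars :=
  h.2.2.2.1 hn

theorem WF.eq_of_mem_pos_of_mem_pos (h : ρ.WF) {x x' : ℕ} {a a' : Act} {y : ℕ}
    (hp : (x, a, y) ∈ ρ.pos) (hp' : (x', a', y) ∈ ρ.pos) : x = x' ∧ a = a' :=
  h.2.2.2.2.1 hp hp'

theorem WF.vars_tgt_subset (h : ρ.WF) : ρ.tgt.vars ⊆ ρ.sourceVars ∪ ρ.targetVars :=
  h.2.2.2.2.2

theorem WF.not_mem_targetVars (h : ρ.WF) {v : ℕ} (hv : v ∈ ρ.sourceVars) :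
    v ∉ ρ.targetVars :=
  fun ⟨_, _, hp⟩ => (h.2.2.1 hp).2 hv

theorem WF.injective_target (h : ρ.WF) : Injective fun p : ρ.pos => p.1.2.2 := by
  rintro ⟨⟨x, a, y⟩, hp⟩ ⟨⟨x', a', y'⟩, hp'⟩ (rfl : y = y')
  obtain ⟨rfl, rfl⟩ := h.eq_of_mem_pos_of_mem_pos hp hp'
  rfl

end Rule

section Satisfaction

variable {Tr : Tm Op ar → Act → Tm Op ar → Prop} {σ σ' : ℕ → Tm Op ar} {ρ : Rule Op ar Act}

theorem Satisfies.congr (hWF : ρ.WF) (hσ : Set.EqOn σ σ' (ρ.sourceVars ∪ ρ.targetVars))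
    (h : Satisfies Tr σ ρ) : Satisfies Tr σ' ρ := by
  refine ⟨fun x a y hp => ?_, fun x a hn => ?_⟩
  · rw [← hσ (Or.inl (hWF.mem_sourceVars_of_mem_pos hp)), ← hσ (Or.inr ⟨x, a, hp⟩)]
    exact h.1 hp
  · rw [← hσ (Or.inl (hWF.mem_sourceVars_of_mem_neg hn))]
    exact h.2 hn

theorem Satisfies.hypsSat (hWF : ρ.WF) (h : Satisfies Tr σ' ρ)
    (hσ : Set.EqOn σ' σ ρ.sourceVars) : HypsSat Tr σ ρ := by
  refine ⟨fun x a y hp => ⟨σ' y, ?_⟩, fun x a hn => ?_⟩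
  · rw [← hσ (hWF.mem_sourceVars_of_mem_pos hp)]
    exact h.1 hp
  · rw [← hσ (hWF.mem_sourceVars_of_mem_neg hn)]
    exact h.2 hn

/-- Targets of distinct positive premises are distinct variables outside the source, so each can
be sent to a successor independently. -/
theorem HypsSat.exists_satisfies {L : Lang Op ar Act} (hL : L.WellFormed) (hTr : IsTransRel L Tr)
    (hWF : ρ.WF) (hσ : ClosedSub L.ops σ) (h : HypsSat Tr σ ρ) :
    ∃ σ', ClosedSub L.ops σ' ∧ Satisfies Tr σ' ρ ∧ Set.EqOn σ' σ ρ.sourceVars := by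
  have hval : ∀ v, ∃ t : Tm Op ar, (t.IsClosed ∧ t.ops ⊆ L.ops) ∧
      (∀ x a, (x, a, v) ∈ ρ.pos → Tr (σ x) a t) ∧ (v ∈ ρ.sourceVars → t = σ v) := by
    intro v
    by_cases hv : ∃ x a, (x, a, v) ∈ ρ.pos
    · obtain ⟨x, a, hp⟩ := hv
      obtain ⟨q, hq⟩ := h.1 hp
      refine ⟨q, hTr.closed_of_tr hL hq, fun x' a' hp' => ?_,
        fun hs => absurd ⟨x, a, hp⟩ (hWF.not_mem_targetVars hs)⟩
      obtain ⟨rfl, rfl⟩ := hWF.eq_of_mem_pos_of_mem_pos hp' hp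
      exact hq
    · exact ⟨σ v, hσ v, fun x a hp => absurd ⟨x, a, hp⟩ hv, fun _ => rfl⟩
  choose σ' hclosed hpos hsrc using hval
  refine ⟨σ', hclosed, ⟨fun x a y hp => ?_, fun x a hn q => ?_⟩, fun v hv => hsrc v hv⟩
  · rw [hsrc x (hWF.mem_sourceVars_of_mem_pos hp)]
    exact hpos y x a hp
  · rw [hsrc x (hWF.mem_sourceVars_of_mem_neg hn)]
    exact h.2 hn q

end Satisfaction

structure IsRuloidSet (L : Lang Op ar Act) (Tr : Tm Op ar → Act → Tm Op ar → Prop)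
    (D : Tm Op ar) (c : Act) (R : Set (Rule Op ar Act)) : Prop where
  isRuloidFor : ∀ ρ ∈ R, IsRuloidFor L.ops ρ D
  act_eq : ∀ ρ ∈ R, ρ.act = c
  sound : ∀ ρ ∈ R, ρ.Sound Tr L.ops
  supportingFor : SupportingFor Tr L.ops R D c

def enabledAtoms (Tr : Tm Op ar → Act → Tm Op ar → Prop) (σ : ℕ → Tm Op ar) (V : Set ℕ) :
    Set (ℕ × Act) :=
  {xa | xa.1 ∈ V ∧ ∃ q, Tr (σ xa.1) xa.2 q}

section RuloidSet

variable {L : Lang Op ar Act} {Tr : Tm Op ar → Act → Tm Op ar → Prop} {σ σ' : ℕ → Tm Op ar}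
  {D : Tm Op ar} {c : Act} {R : Set (Rule Op ar Act)}

theorem HypsSat.of_enabledAtoms_eq {ρ : Rule Op ar Act} {V : Set ℕ} (hWF : ρ.WF)
    (hV : ρ.sourceVars ⊆ V) (he : enabledAtoms Tr σ V = enabledAtoms Tr σ' V)
    (h : HypsSat Tr σ ρ) : HypsSat Tr σ' ρ := by
  refine ⟨fun x a y hp => ?_, fun x a hn q hq => ?_⟩
  · have hxa : (x, a) ∈ enabledAtoms Tr σ' V := he ▸ ⟨hV (hWF.mem_sourceVars_of_mem_pos hp), h.1 hp⟩
    exact hxa.2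
  · have hxa : (x, a) ∈ enabledAtoms Tr σ V := he ▸ ⟨hV (hWF.mem_sourceVars_of_mem_neg hn), q, hq⟩
    obtain ⟨-, q', hq'⟩ := hxa
    exact h.2 hn q' hq'

theorem IsRuloidSet.exists_satisfies_of_tr (hR : IsRuloidSet L Tr D c R)
    (hσ : ClosedSub L.ops σ) {q : Tm Op ar} (h : Tr (D.subst σ) c q) :
    ∃ ρ ∈ R, ∃ σ', ClosedSub L.ops σ' ∧ Satisfies Tr σ' ρ ∧ Set.EqOn σ' σ ρ.sourceVars ∧
      ρ.tgt.subst σ' = q := by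
  obtain ⟨ρ, hρ, σ', hσ', hsat, hsrc, -, htgt⟩ := hR.supportingFor σ q hσ h
  obtain ⟨-, hsrcD, -⟩ := hR.isRuloidFor ρ hρ
  rw [hsrcD] at hsrc
  refine ⟨ρ, hρ, σ', hσ', hsat, ?_, htgt⟩
  rw [Rule.sourceVars, hsrcD]
  exact Tm.eqOn_of_subst_eq hsrc

theorem IsRuloidSet.exists_tr_iff (hR : IsRuloidSet L Tr D c R) (hL : L.WellFormed)
    (hTr : IsTransRel L Tr) (hσ : ClosedSub L.ops σ) :
    (∃ q, Tr (D.subst σ) c q) ↔ ∃ ρ ∈ R, HypsSat Tr σ ρ := by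
  constructor
  · rintro ⟨q, hq⟩
    obtain ⟨ρ, hρ, σ', -, hsat, hagree, -⟩ := hR.exists_satisfies_of_tr hσ hq
    exact ⟨ρ, hρ, hsat.hypsSat (hR.isRuloidFor ρ hρ).1 hagree⟩
  · rintro ⟨ρ, hρ, hhyps⟩
    obtain ⟨hWF, hsrcD, -⟩ := hR.isRuloidFor ρ hρ
    obtain ⟨σ', hσ', hsat, hagree⟩ := hhyps.exists_satisfies hL hTr hWF hσ
    have htr := hR.sound ρ hρ σ' hσ' hsat
    rw [hsrcD, hR.act_eq ρ hρ, Tm.subst_congr (hsrcD ▸ hagree : Set.EqOn σ' σ D.vars)] at htr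
    exact ⟨_, htr⟩

theorem IsRuloidSet.exists_tr_of_enabledAtoms_eq (hR : IsRuloidSet L Tr D c R)
    (hL : L.WellFormed) (hTr : IsTransRel L Tr) (hσ : ClosedSub L.ops σ)
    (hσ' : ClosedSub L.ops σ') {V : Set ℕ} (hV : D.vars ⊆ V)
    (he : enabledAtoms Tr σ V = enabledAtoms Tr σ' V) (h : ∃ q, Tr (D.subst σ) c q) :
    ∃ q, Tr (D.subst σ') c q := by
  rw [hR.exists_tr_iff hL hTr hσ] at h
  rw [hR.exists_tr_iff hL hTr hσ']
  obtain ⟨ρ, hρ, hhyps⟩ := h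
  obtain ⟨hWF, hsrcD, -⟩ := hR.isRuloidFor ρ hρ
  exact ⟨ρ, hρ, hhyps.of_enabledAtoms_eq hWF (by rw [Rule.sourceVars, hsrcD]; exact hV) he⟩

end RuloidSet

def varRuloid (v : ℕ) (c : Act) (y : ℕ) : Rule Op ar Act :=
  ⟨{(v, c, y)}, ∅, .var v, c, .var y⟩

theorem targetVars_varRuloid (v : ℕ) (c : Act) (y : ℕ) :
    (varRuloid v c y : Rule Op ar Act).targetVars = {y} := by
  ext z
  simp [Rule.targetVars, varRuloid]

theorem isRuloidSet_varRuloid {L : Lang Op ar Act} {Tr : Tm Op ar → Act → Tm Op ar → Prop}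
    (hL : L.WellFormed) (hTr : IsTransRel L Tr) {v y : ℕ} (hy : y ≠ v) (c : Act) :
    IsRuloidSet L Tr (.var v) c {varRuloid v c y} := by
  refine ⟨?_, by simp [varRuloid], ?_, ?_⟩
  · rintro _ rfl
    refine ⟨⟨Set.finite_singleton _, Set.finite_empty, ?_, by simp [varRuloid], ?_, ?_⟩,
      rfl, by simp [varRuloid, Tm.ops]⟩
    · rintro x a y' h
      obtain ⟨rfl, -, rfl⟩ : x = v ∧ a = c ∧ y' = y := by simpa [varRuloid] using h
      exact ⟨rfl, hy⟩
    · rintro x a y' x' a' h h'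
      obtain ⟨rfl, rfl, -⟩ : x = v ∧ a = c ∧ y' = y := by simpa [varRuloid] using h
      obtain ⟨rfl, rfl, -⟩ : x' = x ∧ a' = a ∧ y' = y := by simpa [varRuloid] using h'
      exact ⟨rfl, rfl⟩
    · rintro z (rfl : z = y)
      exact Or.inr ⟨v, c, rfl⟩
  · rintro _ rfl σ - hsat
    exact hsat.1 rfl
  · intro σ₀ q hσ₀ hq
    refine ⟨_, rfl, update σ₀ y q, fun w => ?_, ⟨?_, by simp [varRuloid]⟩, ?_, rfl, ?_⟩
    · rcases eq_or_ne w y with rfl | hw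
      · simpa using hTr.closed_of_tr hL hq
      · simpa [hw] using hσ₀ w
    · rintro x a y' h
      obtain ⟨rfl, rfl, rfl⟩ : x = v ∧ a = c ∧ y' = y := by simpa [varRuloid] using h
      simpa [Tm.subst, hy.symm] using hq
    · simp [varRuloid, Tm.subst, hy.symm]
    · simp [varRuloid, Tm.subst]

/-- Names of fresh variables: `inl (p, n)` is the `n`-th variable reserved for the targets of
the ruloid chosen for the premise `p`, and `inr (x, a)` is the target of the premise `x →^a _`
of a composite ruloid. -/
abbrev FreshIdx (Act : Type) : Type := ((ℕ × Act × ℕ) × ℕ) ⊕ (ℕ × Act)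

def premiseVars (fr : FreshIdx Act → ℕ) (p : ℕ × Act × ℕ) : Set ℕ :=
  Set.range fun n => fr (.inl (p, n))

theorem _root_.Set.Infinite.exists_injective_forall_mem {V : Set ℕ} (hV : V.Infinite) (K : Type*)
    [Countable K] : ∃ g : K → ℕ, Injective g ∧ ∀ k, g k ∈ V := by
  obtain ⟨enc, henc⟩ := Countable.exists_injective_nat K
  exact ⟨fun k => hV.natEmbedding _ (enc k),
    fun _ _ h => henc ((hV.natEmbedding _).injective (Subtype.ext h)),
    fun k => (hV.natEmbedding _ (enc k)).2⟩

section Composite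

variable {f : Op} (ts : Fin (ar f) → Tm Op ar)

noncomputable def targetSubst (ρ : Rule Op ar Act) (xf : Fin (ar f) → ℕ)
    (θ : ρ.pos → Rule Op ar Act) : ℕ → Tm Op ar :=
  extend xf ts (extend (fun p : ρ.pos => p.1.2.2) (fun p => (θ p).tgt) Tm.var)

noncomputable def composite (fr : FreshIdx Act → ℕ) (ρ : Rule Op ar Act) (xf : Fin (ar f) → ℕ)
    (θ : ρ.pos → Rule Op ar Act) (E : Set (ℕ × Act)) : Rule Op ar Act where
  pos := (⋃ p, (θ p).pos) ∪ (fun xa : ℕ × Act => (xa.1, xa.2, fr (.inr xa))) '' E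
  neg := (⋃ p, (θ p).neg) ∪ ((Tm.app f ts).vars ×ˢ Set.univ \ E)
  src := .app f ts
  act := ρ.act
  tgt := ρ.tgt.subst (targetSubst ts ρ xf θ)

/-- Instead of negating, as in the paper, one premise of every ruloid for `t_i` and `b` for each
negative premise `x_i ↛^b` of `ρ`, a composite fixes the set `E` of atoms `x →^a` that hold over
the variables of `f(t⃗)`; `E` is admissible if every closed substitution realising it satisfies
the negative premises of `ρ`. -/
def compositeSet (L : Lang Op ar Act) (Tr : Tm Op ar → Act → Tm Op ar → Prop) (c : Act)
    (Rpos : ℕ × Act × ℕ → Fin (ar f) → Set (Rule Op ar Act)) (fr : FreshIdx Act → ℕ) :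
    Set (Rule Op ar Act) :=
  {χ | ∃ ρ ∈ L.rules, ∃ xf : Fin (ar f) → ℕ, Injective xf ∧
    ρ.src = .app f (fun i => .var (xf i)) ∧ ρ.act = c ∧
    ∃ θ : ρ.pos → Rule Op ar Act, (∀ p i, xf i = p.1.1 → θ p ∈ Rpos p.1 i) ∧
    ∃ E ⊆ (Tm.app f ts).vars ×ˢ Set.univ,
      (∀ σ, ClosedSub L.ops σ → enabledAtoms Tr σ (Tm.app f ts).vars = E →
        ∀ ⦃x b⦄, (x, b) ∈ ρ.neg → ∀ i, xf i = x → ∀ q, ¬ Tr ((ts i).subst σ) b q) ∧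
    χ = composite ts fr ρ xf θ E}

variable {ts} {ρ : Rule Op ar Act} {xf : Fin (ar f) → ℕ} {θ : ρ.pos → Rule Op ar Act}
  {fr : FreshIdx Act → ℕ} {E : Set (ℕ × Act)}

theorem sourceVars_eq_range (hsrc : ρ.src = .app f fun i => .var (xf i)) :
    ρ.sourceVars = Set.range xf := by
  rw [Rule.sourceVars, hsrc, Tm.vars_app_var]

theorem exists_eq_source_of_mem_pos (hWF : ρ.WF) (hsrc : ρ.src = .app f fun i => .var (xf i))
    (p : ρ.pos) : ∃ i, xf i = p.1.1 := by
  simpa [sourceVars_eq_range hsrc] using hWF.mem_sourceVars_of_mem_pos p.2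

theorem IsRuloidFor.sourceVars_subset_app {S : Set Op} {χ : Rule Op ar Act} {i : Fin (ar f)}
    (h : IsRuloidFor S χ (ts i)) : χ.sourceVars ⊆ (Tm.app f ts).vars := by
  rw [Rule.sourceVars, h.2.1]
  exact Tm.vars_subset_app ts i

theorem targetSubst_source (hxf : Injective xf) (i : Fin (ar f)) :
    targetSubst ts ρ xf θ (xf i) = ts i :=
  hxf.extend_apply _ _ i

theorem targetSubst_target (hWF : ρ.WF) (hsrc : ρ.src = .app f fun i => .var (xf i))
    (p : ρ.pos) : targetSubst ts ρ xf θ p.1.2.2 = (θ p).tgt := by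
  have hp : ¬ ∃ i, xf i = p.1.2.2 := fun h =>
    hWF.not_mem_targetVars ((sourceVars_eq_range hsrc).symm ▸ h) ⟨_, _, p.2⟩
  rw [targetSubst, extend_apply' _ _ _ hp]
  exact hWF.injective_target.extend_apply _ _ p

theorem targetSubst_cases (hWF : ρ.WF) (hsrc : ρ.src = .app f fun i => .var (xf i))
    (hxf : Injective xf) {v : ℕ} (hv : v ∈ ρ.sourceVars ∪ ρ.targetVars) :
    (∃ i, v = xf i ∧ targetSubst ts ρ xf θ v = ts i) ∨
      ∃ p : ρ.pos, v = p.1.2.2 ∧ targetSubst ts ρ xf θ v = (θ p).tgt := by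
  rcases hv with hv | ⟨x, a, hp⟩
  · rw [sourceVars_eq_range hsrc] at hv
    obtain ⟨i, rfl⟩ := hv
    exact Or.inl ⟨i, rfl, targetSubst_source hxf i⟩
  · exact Or.inr ⟨⟨_, hp⟩, rfl, targetSubst_target hWF hsrc ⟨_, hp⟩⟩

theorem ops_targetSubst_subset {S : Set Op} (hts : ∀ i, (ts i).ops ⊆ S)
    (hθ : ∀ p, (θ p).tgt.ops ⊆ S) (v : ℕ) : (targetSubst ts ρ xf θ v).ops ⊆ S := by
  classical
  rw [targetSubst, extend_def, extend_def]
  split_ifs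
  exacts [hts _, hθ _, by simp [Tm.ops]]

theorem mem_composite_pos {x : ℕ} {a : Act} {y : ℕ}
    (h : (x, a, y) ∈ (composite ts fr ρ xf θ E).pos) :
    (∃ p, (x, a, y) ∈ (θ p).pos) ∨ (x, a) ∈ E ∧ y = fr (.inr (x, a)) := by
  rcases h with h | ⟨xa, hxa, ⟨⟩⟩
  · exact Or.inl (Set.mem_iUnion.1 h)
  · exact Or.inr ⟨hxa, rfl⟩

theorem satisfies_composite_iff {Tr : Tm Op ar → Act → Tm Op ar → Prop} {σ : ℕ → Tm Op ar} :
    Satisfies Tr σ (composite ts fr ρ xf θ E) ↔ (∀ p, Satisfies Tr σ (θ p)) ∧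
      (∀ xa ∈ E, Tr (σ xa.1) xa.2 (σ (fr (.inr xa)))) ∧
      ∀ xa ∈ (Tm.app f ts).vars ×ˢ Set.univ \ E, ∀ q, ¬ Tr (σ xa.1) xa.2 q := by
  constructor
  · rintro ⟨hpos, hneg⟩
    exact ⟨fun p => ⟨fun x a y h => hpos (Or.inl (Set.mem_iUnion.2 ⟨p, h⟩)),
      fun x a h => hneg (Or.inl (Set.mem_iUnion.2 ⟨p, h⟩))⟩,
      fun xa h => hpos (Or.inr ⟨xa, h, rfl⟩), fun xa h => hneg (Or.inr h)⟩
  · rintro ⟨hθ, hE, hE'⟩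
    refine ⟨fun x a y h => ?_, fun x a h => ?_⟩
    · rcases mem_composite_pos h with ⟨p, hp⟩ | ⟨hxa, rfl⟩
      exacts [(hθ p).1 hp, hE _ hxa]
    · rcases h with h | h
      · obtain ⟨p, hp⟩ := Set.mem_iUnion.1 h
        exact (hθ p).2 hp
      · exact hE' _ h

theorem eq_of_mem_composite_pos (hθWF : ∀ p, (θ p).WF)
    (hθV : ∀ p, (θ p).targetVars ⊆ premiseVars fr p.1) (hfr : Injective fr)
    {x x' : ℕ} {a a' : Act} {y : ℕ} (h : (x, a, y) ∈ (composite ts fr ρ xf θ E).pos)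
    (h' : (x', a', y) ∈ (composite ts fr ρ xf θ E).pos) : x = x' ∧ a = a' := by
  rcases mem_composite_pos h with ⟨p, hp⟩ | ⟨-, rfl⟩ <;>
    rcases mem_composite_pos h' with ⟨p', hp'⟩ | ⟨-, hy⟩
  · obtain ⟨n, hn⟩ := hθV p ⟨x, a, hp⟩
    obtain ⟨n', hn'⟩ := hθV p' ⟨x', a', hp'⟩
    have hpp' := hfr (hn.trans hn'.symm)
    simp only [Sum.inl.injEq, Prod.mk.injEq] at hpp'
    obtain rfl := Subtype.ext hpp'.1
    exact (hθWF p).eq_of_mem_pos_of_mem_pos hp hp'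
  · obtain ⟨n, hn⟩ := hθV p ⟨x, a, hp⟩
    simpa using hfr (hn.trans hy)
  · obtain ⟨n', hn'⟩ := hθV p' ⟨x', a', hp'⟩
    simpa using hfr hn'
  · simpa using hfr hy

theorem wf_composite [Finite Act] (hWF : ρ.WF) (hsrc : ρ.src = .app f fun i => .var (xf i))
    (hxf : Injective xf) (hθWF : ∀ p, (θ p).WF)
    (hθsrc : ∀ p, (θ p).sourceVars ⊆ (Tm.app f ts).vars)
    (hθV : ∀ p, (θ p).targetVars ⊆ premiseVars fr p.1) (hfr : Injective fr)
    (hfrD : ∀ k, fr k ∉ (Tm.app f ts).vars) (hE : E ⊆ (Tm.app f ts).vars ×ˢ Set.univ) :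
    (composite ts fr ρ xf θ E).WF := by
  have : Finite ρ.pos := hWF.1.to_subtype
  have hDfin : ((Tm.app f ts).vars ×ˢ (Set.univ : Set Act)).Finite :=
    (Tm.vars_finite _).prod Set.finite_univ
  refine ⟨(Set.finite_iUnion fun p => (hθWF p).1).union ((hDfin.subset hE).image _),
    (Set.finite_iUnion fun p => (hθWF p).2.1).union hDfin.sdiff, ?_, ?_, ?_, ?_⟩
  · intro x a y h
    rcases mem_composite_pos h with ⟨p, hp⟩ | ⟨hxa, rfl⟩
    · obtain ⟨n, rfl⟩ := hθV p ⟨x, a, hp⟩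
      exact ⟨hθsrc p ((hθWF p).mem_sourceVars_of_mem_pos hp), hfrD _⟩
    · exact ⟨(hE hxa).1, hfrD _⟩
  · rintro x a (h | h)
    · obtain ⟨p, hp⟩ := Set.mem_iUnion.1 h
      exact hθsrc p ((hθWF p).mem_sourceVars_of_mem_neg hp)
    · exact h.1.1
  · exact fun x a y x' a' => eq_of_mem_composite_pos hθWF hθV hfr
  · intro v hv
    simp only [composite, Tm.vars_subst, Set.mem_iUnion] at hv
    obtain ⟨w, hw, hv⟩ := hv
    rcases targetSubst_cases hWF hsrc hxf (hWF.vars_tgt_subset hw) with ⟨i, -, he⟩ | ⟨p, -, he⟩ <;>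
      rw [he] at hv
    · exact Or.inl (Tm.vars_subset_app ts i hv)
    · rcases (hθWF p).vars_tgt_subset hv with h | ⟨x, a, h⟩
      · exact Or.inl (hθsrc p h)
      · exact Or.inr ⟨x, a, Or.inl (Set.mem_iUnion.2 ⟨p, h⟩)⟩

theorem tgt_ops_composite_subset {S : Set Op} (hρ : ρ.tgt.ops ⊆ S) (hD : (Tm.app f ts).ops ⊆ S)
    (hθ : ∀ p, (θ p).tgt.ops ⊆ S) : (composite ts fr ρ xf θ E).tgt.ops ⊆ S :=
  (Tm.ops_subst_subset _ _).trans (Set.union_subset hρ (Set.iUnion₂_subset fun v _ =>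
    ops_targetSubst_subset (fun i => (Tm.ops_subset_app ts i).trans hD) hθ v))

theorem targetVars_composite_subset (hθV : ∀ p, (θ p).targetVars ⊆ premiseVars fr p.1) :
    (composite ts fr ρ xf θ E).targetVars ⊆ Set.range fr := by
  rintro y ⟨x, a, h⟩
  rcases mem_composite_pos h with ⟨p, hp⟩ | ⟨-, rfl⟩
  · obtain ⟨n, rfl⟩ := hθV p ⟨x, a, hp⟩
    exact ⟨_, rfl⟩
  · exact ⟨_, rfl⟩

theorem sound_composite {L : Lang Op ar Act} {Tr : Tm Op ar → Act → Tm Op ar → Prop}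
    (hL : L.WellFormed) (hTr : IsTransRel L Tr) (hρ : ρ ∈ L.rules)
    (hsrc : ρ.src = .app f fun i => .var (xf i)) (hxf : Injective xf)
    (hD : (Tm.app f ts).ops ⊆ L.ops)
    (hθ : ∀ p i, xf i = p.1.1 →
      IsRuloidFor L.ops (θ p) (ts i) ∧ (θ p).act = p.1.2.1 ∧ (θ p).Sound Tr L.ops)
    (hE : E ⊆ (Tm.app f ts).vars ×ˢ Set.univ)
    (hneg : ∀ σ, ClosedSub L.ops σ → enabledAtoms Tr σ (Tm.app f ts).vars = E →
      ∀ ⦃x b⦄, (x, b) ∈ ρ.neg → ∀ i, xf i = x → ∀ q, ¬ Tr ((ts i).subst σ) b q) :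
    (composite ts fr ρ xf θ E).Sound Tr L.ops := by
  intro σ hσ hsat
  obtain ⟨hθsat, hEpos, hEneg⟩ := satisfies_composite_iff.1 hsat
  have hWF := hL.wf hρ
  have hσE : enabledAtoms Tr σ (Tm.app f ts).vars = E := by
    ext xa
    refine ⟨fun ⟨hx, q, hq⟩ => ?_, fun h => ⟨(hE h).1, _, hEpos _ h⟩⟩
    by_contra h
    exact hEneg xa ⟨⟨hx, trivial⟩, h⟩ q hq
  have hτ : ClosedSub L.ops fun v => (targetSubst ts ρ xf θ v).subst σ := fun v =>
    hσ.subst (ops_targetSubst_subset (fun i => (Tm.ops_subset_app ts i).trans hD)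
      (fun p => (exists_eq_source_of_mem_pos hWF hsrc p).elim fun i hi => (hθ p i hi).1.2.2) v)
  have hsatρ : Satisfies Tr (fun v => (targetSubst ts ρ xf θ v).subst σ) ρ := by
    refine ⟨fun x a y hp => ?_, fun x b hn q => ?_⟩
    · obtain ⟨i, rfl⟩ : x ∈ Set.range xf :=
        sourceVars_eq_range hsrc ▸ hWF.mem_sourceVars_of_mem_pos hp
      obtain ⟨⟨-, hθsrc, -⟩, hθact, hθsound⟩ := hθ ⟨_, hp⟩ i rfl
      have htr := hθsound σ hσ (hθsat ⟨_, hp⟩)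
      rw [hθsrc, hθact] at htr
      simp only [targetSubst_source hxf]
      rwa [targetSubst_target hWF hsrc ⟨_, hp⟩]
    · obtain ⟨i, rfl⟩ : x ∈ Set.range xf :=
        sourceVars_eq_range hsrc ▸ hWF.mem_sourceVars_of_mem_neg hn
      simp only [targetSubst_source hxf]
      exact hneg σ hσ hσE hn i rfl q
  have htr := hTr.1 ρ hρ _ hτ hsatρ
  rw [hsrc, ← Tm.subst_subst _ _ ρ.tgt] at htr
  simpa [composite, Tm.subst, targetSubst_source hxf] using htr

theorem exists_satisfies_composite {L : Lang Op ar Act} {Tr : Tm Op ar → Act → Tm Op ar → Prop}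
    (hL : L.WellFormed) (hTr : IsTransRel L Tr) (hfr : Injective fr)
    (hfrD : ∀ k, fr k ∉ (Tm.app f ts).vars) (hθWF : ∀ p, (θ p).WF)
    (hθsrc : ∀ p, (θ p).sourceVars ⊆ (Tm.app f ts).vars)
    (hθV : ∀ p, (θ p).targetVars ⊆ premiseVars fr p.1) {σ₀ : ℕ → Tm Op ar}
    (hσ₀ : ClosedSub L.ops σ₀) (σp : ρ.pos → ℕ → Tm Op ar) (hσp : ∀ p, ClosedSub L.ops (σp p))
    (hsatp : ∀ p, Satisfies Tr (σp p) (θ p)) (hagreep : ∀ p, Set.EqOn (σp p) σ₀ (θ p).sourceVars) :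
    ∃ σ, ClosedSub L.ops σ ∧
      Satisfies Tr σ (composite ts fr ρ xf θ (enabledAtoms Tr σ₀ (Tm.app f ts).vars)) ∧
      Set.EqOn σ σ₀ (Tm.app f ts).vars ∧
      ∀ p, Set.EqOn σ (σp p) ((θ p).sourceVars ∪ (θ p).targetVars) := by
  classical
  -- `σ` is `σp p` on the variables reserved for `p`, sends the target of an asserted atom
  -- `x →^a` to an `a`-successor of `σ₀ x`, and is `σ₀` elsewhere.
  let G : FreshIdx Act → Tm Op ar := Sum.elim
    (fun pn => if hp : pn.1 ∈ ρ.pos then σp ⟨pn.1, hp⟩ (fr (.inl pn)) else σ₀ 0)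
    (fun xa => if h : ∃ q, Tr (σ₀ xa.1) xa.2 q then h.choose else σ₀ 0)
  have hG : ∀ k, extend fr G σ₀ (fr k) = G k := hfr.extend_apply G σ₀
  have hD : Set.EqOn (extend fr G σ₀) σ₀ (Tm.app f ts).vars := fun v hv =>
    extend_apply' _ _ _ (by rintro ⟨k, rfl⟩; exact hfrD k hv)
  have hθ : ∀ p, Set.EqOn (extend fr G σ₀) (σp p) ((θ p).sourceVars ∪ (θ p).targetVars) := by
    rintro p v (hv | hv)
    · rw [hD (hθsrc p hv), hagreep p hv]
    · obtain ⟨n, rfl⟩ := hθV p hv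
      simp [hG, G, p.2]
  refine ⟨extend fr G σ₀, fun v => ?_, ?_, hD, hθ⟩
  · by_cases hv : ∃ k, fr k = v
    · obtain ⟨pn | xa, rfl⟩ := hv <;> rw [hG] <;> simp only [G, Sum.elim_inl, Sum.elim_inr] <;>
        split_ifs with h
      exacts [hσp _ _, hσ₀ 0, hTr.closed_of_tr hL h.choose_spec, hσ₀ 0]
    · rw [extend_apply' _ _ _ hv]
      exact hσ₀ v
  · refine satisfies_composite_iff.2 ⟨fun p => (hsatp p).congr (hθWF p) fun v hv => (hθ p hv).symm,
      fun xa hxa => ?_, fun xa hxa q hq => ?_⟩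
    · rw [hG, hD hxa.1]
      simp only [G, Sum.elim_inr, dif_pos hxa.2]
      exact hxa.2.choose_spec
    · rw [hD hxa.1.1] at hq
      exact hxa.2 ⟨hxa.1.1, q, hq⟩

theorem exists_rule_of_tr_app {L : Lang Op ar Act} {Tr : Tm Op ar → Act → Tm Op ar → Prop}
    (hL : L.WellFormed) (hTr : IsTransRel L Tr) {σ₀ : ℕ → Tm Op ar} {c : Act} {q : Tm Op ar}
    (h : Tr ((Tm.app f ts).subst σ₀) c q) :
    ∃ ρ ∈ L.rules, ∃ xf : Fin (ar f) → ℕ, Injective xf ∧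
      ρ.src = .app f (fun i => .var (xf i)) ∧ ρ.act = c ∧
      ∃ σ₁, ClosedSub L.ops σ₁ ∧ Satisfies Tr σ₁ ρ ∧ (∀ i, σ₁ (xf i) = (ts i).subst σ₀) ∧
        ρ.tgt.subst σ₁ = q := by
  obtain ⟨ρ, hρ, σ₁, hσ₁, hsat, hsrc, hact, htgt⟩ := hTr.2 _ _ _ h
  obtain ⟨-, g, xf, hxf, hsrcρ⟩ := (hL.2.2 ρ hρ).1
  rw [hsrcρ] at hsrc
  obtain ⟨rfl, hargs⟩ := Tm.app.inj hsrc
  exact ⟨ρ, hρ, xf, hxf, hsrcρ, hact, σ₁, hσ₁, hsat, fun i => congrFun (eq_of_heq hargs) i, htgt⟩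

variable {L : Lang Op ar Act} {Tr : Tm Op ar → Act → Tm Op ar → Prop} {c : Act}
  {Rpos : ℕ × Act × ℕ → Fin (ar f) → Set (Rule Op ar Act)}

theorem supportingFor_compositeSet (hL : L.WellFormed) (hTr : IsTransRel L Tr)
    (hRpos : ∀ p i, IsRuloidSet L Tr (ts i) p.2.1 (Rpos p i))
    (hRposV : ∀ p i, ∀ θ ∈ Rpos p i, θ.targetVars ⊆ premiseVars fr p)
    (hRneg : ∀ i b, ∃ R, IsRuloidSet L Tr (ts i) b R) (hfr : Injective fr)
    (hfrD : ∀ k, fr k ∉ (Tm.app f ts).vars) :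
    SupportingFor Tr L.ops (compositeSet ts L Tr c Rpos fr) (Tm.app f ts) c := by
  intro σ₀ q hσ₀ hq
  obtain ⟨ρ, hρ, xf, hxf, hsrc, hact, σ₁, hσ₁, hsat₁, hσ₁x, rfl⟩ := exists_rule_of_tr_app hL hTr hq
  have hWF := hL.wf hρ
  have hsub : ∀ p : ρ.pos, ∃ θp, (∀ i, xf i = p.1.1 → θp ∈ Rpos p.1 i) ∧ ∃ i, θp ∈ Rpos p.1 i ∧
      ∃ σp, ClosedSub L.ops σp ∧ Satisfies Tr σp θp ∧ Set.EqOn σp σ₀ θp.sourceVars ∧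
        θp.tgt.subst σp = σ₁ p.1.2.2 := by
    intro p
    obtain ⟨i, hi⟩ := exists_eq_source_of_mem_pos hWF hsrc p
    have htr : Tr ((ts i).subst σ₀) p.1.2.1 (σ₁ p.1.2.2) := by
      rw [← hσ₁x, hi]
      exact hsat₁.1 p.2
    obtain ⟨θp, hθp, hσp⟩ := (hRpos p.1 i).exists_satisfies_of_tr hσ₀ htr
    exact ⟨θp, fun j hj => hxf (hj.trans hi.symm) ▸ hθp, i, hθp, hσp⟩
  choose θ hθ idx hθmem σp hσp hsatp hagreep htgtp using hsub
  have hθR := fun p => (hRpos p.1 (idx p)).isRuloidFor (θ p) (hθmem p)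
  obtain ⟨σ, hσ, hsat, hσD, hσθ⟩ := exists_satisfies_composite hL hTr hfr hfrD
    (fun p => (hθR p).1) (fun p => (hθR p).sourceVars_subset_app)
    (fun p => hRposV _ _ _ (hθmem p)) hσ₀ σp hσp hsatp hagreep
  have hneg : ∀ σ, ClosedSub L.ops σ →
      enabledAtoms Tr σ (Tm.app f ts).vars = enabledAtoms Tr σ₀ (Tm.app f ts).vars →
      ∀ ⦃x b⦄, (x, b) ∈ ρ.neg → ∀ i, xf i = x → ∀ q, ¬ Tr ((ts i).subst σ) b q := by
    rintro σ hσ he x b hn i rfl q hq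
    obtain ⟨R, hR⟩ := hRneg i b
    obtain ⟨q', hq'⟩ := hR.exists_tr_of_enabledAtoms_eq hL hTr hσ hσ₀ (Tm.vars_subset_app ts i) he
      ⟨q, hq⟩
    exact hsat₁.2 hn q' (hσ₁x i ▸ hq')
  refine ⟨_, ⟨ρ, hρ, xf, hxf, hsrc, hact, θ, hθ, _, fun xa h => ⟨h.1, trivial⟩, hneg, rfl⟩,
    σ, hσ, hsat, Tm.subst_congr hσD, hact, ?_⟩
  rw [composite, Tm.subst_subst]
  refine Tm.subst_congr fun v hv => ?_
  rcases targetSubst_cases hWF hsrc hxf (hWF.vars_tgt_subset hv) with ⟨i, rfl, he⟩ | ⟨p, rfl, he⟩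
  · rw [he, hσ₁x, Tm.subst_congr (hσD.mono (Tm.vars_subset_app ts i))]
  · rw [he, ← htgtp p]
    exact Tm.subst_congr ((hσθ p).mono (hθR p).1.vars_tgt_subset)

theorem subsingleton_setOf_src_eq (ρ : Rule Op ar Act) (f : Op) :
    {xf : Fin (ar f) → ℕ | ρ.src = .app f fun i => .var (xf i)}.Subsingleton := by
  intro xf hxf xf' hxf'
  have h := hxf.symm.trans hxf'
  simp only [Tm.app.injEq, heq_eq_eq, true_and] at h
  funext i
  simpa using congrFun h i

theorem finite_compositeSet [Finite Act] (hL : L.WellFormed)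
    (hRposFin : ∀ p i, (Rpos p i).Finite) : (compositeSet ts L Tr c Rpos fr).Finite := by
  have hDfin : ((Tm.app f ts).vars ×ˢ (Set.univ : Set Act)).Finite :=
    (Tm.vars_finite _).prod Set.finite_univ
  refine Set.Finite.subset (Set.Finite.biUnion hL.2.1 fun ρ hρ =>
    Set.Finite.biUnion (subsingleton_setOf_src_eq ρ f).finite fun xf _ =>
      have : Finite ρ.pos := (hL.wf hρ).1.to_subtype
      ((Set.Finite.pi fun p : ρ.pos => Set.finite_iUnion fun i => hRposFin p.1 i).prod
        hDfin.finite_subsets).image fun θE => composite ts fr ρ xf θE.1 θE.2) ?_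
  rintro _ ⟨ρ, hρ, xf, -, hsrc, -, θ, hθ, E, hE, -, rfl⟩
  simp only [Set.mem_iUnion]
  refine ⟨ρ, hρ, xf, hsrc, (θ, E), ⟨fun p _ => ?_, hE⟩, rfl⟩
  obtain ⟨i, hi⟩ := exists_eq_source_of_mem_pos (hL.wf hρ) hsrc p
  exact Set.mem_iUnion.2 ⟨i, hθ p i hi⟩

theorem isRuloidSet_compositeSet [Finite Act] (hL : L.WellFormed) (hTr : IsTransRel L Tr)
    (hD : (Tm.app f ts).ops ⊆ L.ops)
    (hRpos : ∀ p i, IsRuloidSet L Tr (ts i) p.2.1 (Rpos p i))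
    (hRposV : ∀ p i, ∀ θ ∈ Rpos p i, θ.targetVars ⊆ premiseVars fr p)
    (hRneg : ∀ i b, ∃ R, IsRuloidSet L Tr (ts i) b R) (hfr : Injective fr)
    (hfrD : ∀ k, fr k ∉ (Tm.app f ts).vars) :
    IsRuloidSet L Tr (Tm.app f ts) c (compositeSet ts L Tr c Rpos fr) := by
  refine ⟨?_, ?_, ?_, supportingFor_compositeSet hL hTr hRpos hRposV hRneg hfr hfrD⟩
  · rintro _ ⟨ρ, hρ, xf, hxf, hsrc, -, θ, hθ, E, hE, -, rfl⟩
    have hWF := hL.wf hρ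
    choose idx hidx using exists_eq_source_of_mem_pos hWF hsrc
    have hθR p := (hRpos p.1 (idx p)).isRuloidFor _ (hθ p _ (hidx p))
    refine ⟨wf_composite hWF hsrc hxf (fun p => (hθR p).1) (fun p => (hθR p).sourceVars_subset_app)
      (fun p => hRposV _ _ _ (hθ p _ (hidx p))) hfr hfrD hE, rfl, ?_⟩
    exact tgt_ops_composite_subset (hL.tgt_ops_subset hρ) hD fun p => (hθR p).2.2
  · rintro _ ⟨ρ, -, -, -, -, hact, -, -, -, -, -, rfl⟩
    exact hact
  · rintro _ ⟨ρ, hρ, xf, hxf, hsrc, -, θ, hθ, E, hE, hneg, rfl⟩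
    exact sound_composite hL hTr hρ hsrc hxf hD (fun p i hi =>
      ⟨(hRpos p.1 i).isRuloidFor _ (hθ p i hi), (hRpos p.1 i).act_eq _ (hθ p i hi),
        (hRpos p.1 i).sound _ (hθ p i hi)⟩) hE hneg

end Composite

theorem exists_finite_isRuloidSet [Finite Act] {L : Lang Op ar Act}
    {Tr : Tm Op ar → Act → Tm Op ar → Prop} (hL : L.WellFormed) (hTr : IsTransRel L Tr)
    (D : Tm Op ar) (hD : D.ops ⊆ L.ops) (c : Act) {V : Set ℕ} (hV : V.Infinite)
    (hVD : Disjoint V D.vars) :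
    ∃ R, R.Finite ∧ IsRuloidSet L Tr D c R ∧ ∀ ρ ∈ R, ρ.targetVars ⊆ V := by
  induction D generalizing c V with
  | var v =>
    obtain ⟨y, hyV, hyv⟩ := (hV.sdiff (Set.finite_singleton v)).nonempty
    refine ⟨{varRuloid v c y}, Set.finite_singleton _, isRuloidSet_varRuloid hL hTr hyv c, ?_⟩
    rintro _ rfl
    rw [targetVars_varRuloid]
    exact Set.singleton_subset_iff.2 hyV
  | app f ts ih =>
    obtain ⟨fr, hfr, hfrV⟩ := hV.exists_injective_forall_mem (FreshIdx Act)
    have hfrD : ∀ k, fr k ∉ (Tm.app f ts).vars := fun k => hVD.notMem_of_mem_left (hfrV k)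
    have hts : ∀ i, (ts i).ops ⊆ L.ops := fun i => (Tm.ops_subset_app ts i).trans hD
    have hpremV : ∀ p i, Disjoint (premiseVars fr p) (ts i).vars := fun p i =>
      Set.disjoint_left.2 fun _ ⟨_, hn⟩ hv => hfrD _ (hn ▸ Tm.vars_subset_app ts i hv)
    choose Rpos hRposFin hRpos hRposV using fun p i =>
      ih i (hts i) p.2.1 (Set.infinite_range_of_injective
        (hfr.comp (Sum.inl_injective.comp (Prod.mk_right_injective p)))) (hpremV p i)
    have hRneg : ∀ i b, ∃ R, IsRuloidSet L Tr (ts i) b R := fun i b =>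
      (ih i (hts i) b (Tm.vars_finite _).infinite_compl disjoint_compl_left).elim
        fun R hR => ⟨R, hR.2.1⟩
    refine ⟨compositeSet ts L Tr c Rpos fr, finite_compositeSet hL hRposFin,
      isRuloidSet_compositeSet hL hTr hD hRpos hRposV hRneg hfr hfrD, ?_⟩
    rintro _ ⟨ρ, hρ, xf, -, hsrc, -, θ, hθ, -, -, -, rfl⟩
    refine (targetVars_composite_subset fun p => ?_).trans (Set.range_subset_iff.2 hfrV)
    obtain ⟨i, hi⟩ := exists_eq_source_of_mem_pos (hL.wf hρ) hsrc p
    exact hRposV _ _ _ (hθ p i hi)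

theorem ruloid_theorem_general {Op : Type} {ar : Op → ℕ} {Act : Type}
    [Finite Act]
    (L : Lang Op ar Act) (hL : L.WellFormed)
    (Tr : Tm Op ar → Act → Tm Op ar → Prop) (hTr : IsTransRel L Tr)
    (X : Set ℕ) (hX : X.Finite)
    (D : Tm Op ar) (hD : D.ops ⊆ L.ops) (c : Act) :
    ∃ R : Set (Rule Op ar Act), R.Finite ∧
      (∀ ρ ∈ R, IsRuloidFor L.ops ρ D ∧ ρ.act = c ∧
        ρ.Sound Tr L.ops ∧ ρ.targetVars ∩ X = ∅) ∧
      SupportingFor Tr L.ops R D c := by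
  obtain ⟨R, hRfin, hR, hRV⟩ := exists_finite_isRuloidSet hL hTr D hD c
    (hX.union D.vars_finite).infinite_compl (disjoint_compl_left.mono_right Set.subset_union_right)
  refine ⟨R, hRfin, fun ρ hρ => ⟨hR.isRuloidFor ρ hρ, hR.act_eq ρ hρ, hR.sound ρ hρ, ?_⟩,
    hR.supportingFor⟩
  exact Set.eq_empty_of_forall_notMem fun y ⟨hy, hyX⟩ => hRV ρ hρ hy (Or.inl hyX)

/-- Ruloid Theorem: for each context `D` over `Σ_G`, each action
`c`, and each finite set `X` of variables, there is a finite set `R` of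
ruloids for `D` with action `c` that are sound, that form a supporting set
for `D` and `c`, and whose target variables avoid `X`. -/
theorem ruloid_theorem {Op : Type} {ar : Op → ℕ} {Act : Type}
    [Finite Act] [Nonempty Act]
    (L : Lang Op ar Act) (hL : L.WellFormed)
    (Tr : Tm Op ar → Act → Tm Op ar → Prop) (hTr : IsTransRel L Tr)
    (X : Set ℕ) (hX : X.Finite)
    (D : Tm Op ar) (hD : D.ops ⊆ L.ops) (c : Act) :
    ∃ R : Set (Rule Op ar Act), R.Finite ∧
      (∀ ρ ∈ R, IsRuloidFor L.ops ρ D ∧ ρ.act = c ∧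
        ρ.Sound Tr L.ops ∧ ρ.targetVars ∩ X = ∅) ∧
      SupportingFor Tr L.ops R D c :=
  ruloid_theorem_general L hL Tr hTr X hX D hD c

end GSOSPaper
end

section
/- Let G be a GSOS language without junk rules. Restricted to closed Σ_G-terms, rule-matching bisimilarity coincides with bisimilarity: for all closed Σ_G-terms p and q, p ≈RM_G q if and only if p ↔_G q. -/
/-!
Common infrastructure for formalizing results about GSOS languages
("A rule-matching bisimulation method", Aceto et al.).

* Variables are natural numbers (a countably infinite set).
* Terms over a signature given by a type `Op` of operation symbols with
  arities `ar : Op → ℕ`.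
* GSOS rules and ruloids, the induced (sound and supported) transition
  relation, bisimilarity, ruloid systems, valid ruloids, initial transition
  formulae and rule-matching bisimulation.
-/

namespace GSOSPaper

variable {Op : Type} {ar : Op → ℕ} {Act : Type}

/-!
A ruloid for a closed term `P` has no source variables, so by well-formedness it has no
premises and a closed target. Instantiating soundness and support with any closed
substitution `σ₀` then shows that the transitions of `P` are exactly the conclusions
`P →ᵃ ρ.tgt` of the ruloids `ρ ∈ rul P`. On closed terms the rule-matching transfer
condition therefore becomes the bisimulation transfer condition: a matching set `J` can be
taken to be a single ruloid, and the entailment between hypotheses is trivial.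
-/

theorem Tm.subst_eq_self_of_isClosed {t : Tm Op ar} (ht : t.IsClosed) (σ : ℕ → Tm Op ar) :
    t.subst σ = t := by
  induction t with
  | var x => exact absurd ht (Set.singleton_ne_empty x)
  | app f ts ih =>
    simp only [Tm.IsClosed, Tm.vars, Set.iUnion_eq_empty] at ht
    simp only [Tm.subst]
    exact congrArg _ (funext fun i => ih i (ht i))

namespace Rule

variable {ρ : Rule Op ar Act}

theorem targetVars_eq_empty (hpos : ρ.pos = ∅) : ρ.targetVars = ∅ := by
  simp [targetVars, hpos]

theorem WF.pos_eq_empty (hρ : ρ.WF) (hsrc : ρ.sourceVars = ∅) : ρ.pos = ∅ :=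
  Set.eq_empty_of_forall_notMem fun ⟨_, _, _⟩ hm => by simpa [hsrc] using (hρ.2.2.1 hm).1

theorem WF.neg_eq_empty (hρ : ρ.WF) (hsrc : ρ.sourceVars = ∅) : ρ.neg = ∅ :=
  Set.eq_empty_of_forall_notMem fun ⟨_, _⟩ hm => by simpa [hsrc] using hρ.2.2.2.1 hm

theorem WF.tgt_isClosed (hρ : ρ.WF) (hsrc : ρ.sourceVars = ∅) : ρ.tgt.IsClosed := by
  have htgt := hρ.2.2.2.2.2
  rwa [hsrc, targetVars_eq_empty (hρ.pos_eq_empty hsrc), Set.union_empty,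
    Set.subset_empty_iff] at htgt

theorem rename_eq_self (hpos : ρ.pos = ∅) (hneg : ρ.neg = ∅) (hsrc : ρ.src.IsClosed)
    (htgt : ρ.tgt.IsClosed) (r : ℕ → ℕ) : ρ.rename r = ρ := by
  obtain ⟨pos, neg, src, act, tgt⟩ := ρ
  dsimp only at hpos hneg hsrc htgt
  subst hpos hneg
  simp only [rename, Set.image_empty, Tm.rename, Tm.subst_eq_self_of_isClosed hsrc,
    Tm.subst_eq_self_of_isClosed htgt]

theorem satisfies_of_pos_neg_eq_empty (hpos : ρ.pos = ∅) (hneg : ρ.neg = ∅)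
    (Tr : Tm Op ar → Act → Tm Op ar → Prop) (σ : ℕ → Tm Op ar) : Satisfies Tr σ ρ :=
  ⟨fun _ _ _ h => by simp [hpos] at h, fun _ _ h => by simp [hneg] at h⟩

theorem hypsSat_of_pos_neg_eq_empty (hpos : ρ.pos = ∅) (hneg : ρ.neg = ∅)
    (Tr : Tm Op ar → Act → Tm Op ar → Prop) (σ : ℕ → Tm Op ar) : HypsSat Tr σ ρ :=
  ⟨fun _ _ _ h => by simp [hpos] at h, fun _ _ h => by simp [hneg] at h⟩

end Rule

namespace IsRuloidSystem

variable {L : Lang Op ar Act} {Tr : Tm Op ar → Act → Tm Op ar → Prop}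
  {rul : Tm Op ar → Set (Rule Op ar Act)} {P : Tm Op ar} {ρ : Rule Op ar Act}

theorem sourceVars_eq_empty (hrul : IsRuloidSystem L Tr rul) (hP : P.IsClosed)
    (hρ : ρ ∈ rul P) : ρ.sourceVars = ∅ := by
  rw [Rule.sourceVars, ((hrul P).2.1 ρ hρ).2.1]
  exact hP

theorem pos_eq_empty (hrul : IsRuloidSystem L Tr rul) (hP : P.IsClosed) (hρ : ρ ∈ rul P) :
    ρ.pos = ∅ :=
  ((hrul P).2.1 ρ hρ).1.pos_eq_empty (hrul.sourceVars_eq_empty hP hρ)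

theorem neg_eq_empty (hrul : IsRuloidSystem L Tr rul) (hP : P.IsClosed) (hρ : ρ ∈ rul P) :
    ρ.neg = ∅ :=
  ((hrul P).2.1 ρ hρ).1.neg_eq_empty (hrul.sourceVars_eq_empty hP hρ)

theorem targetVars_eq_empty (hrul : IsRuloidSystem L Tr rul) (hP : P.IsClosed)
    (hρ : ρ ∈ rul P) : ρ.targetVars = ∅ :=
  Rule.targetVars_eq_empty (hrul.pos_eq_empty hP hρ)

theorem tgt_isClosed (hrul : IsRuloidSystem L Tr rul) (hP : P.IsClosed) (hρ : ρ ∈ rul P) :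
    ρ.tgt.IsClosed :=
  ((hrul P).2.1 ρ hρ).1.tgt_isClosed (hrul.sourceVars_eq_empty hP hρ)

theorem rename_eq_self (hrul : IsRuloidSystem L Tr rul) (hP : P.IsClosed) (hρ : ρ ∈ rul P)
    (r : ℕ → ℕ) : ρ.rename r = ρ :=
  Rule.rename_eq_self (hrul.pos_eq_empty hP hρ) (hrul.neg_eq_empty hP hρ)
    (((hrul P).2.1 ρ hρ).2.1 ▸ hP) (hrul.tgt_isClosed hP hρ) r

theorem isValidRuloid_iff_mem (hrul : IsRuloidSystem L Tr rul) (hP : P.IsClosed) :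
    IsValidRuloid rul P ρ ↔ ρ ∈ rul P := by
  constructor
  · rintro ⟨ρ', hρ', r, -, -, -, rfl⟩
    rwa [hrul.rename_eq_self hP hρ']
  · intro hρ
    refine ⟨ρ, hρ, id, fun _ _ => rfl, Set.injOn_id _, fun y hy => ?_,
      (hrul.rename_eq_self hP hρ id).symm⟩
    simp [hrul.targetVars_eq_empty hP hρ] at hy

variable {σ₀ : ℕ → Tm Op ar}

theorem tr_of_mem (hrul : IsRuloidSystem L Tr rul) (hσ₀ : ClosedSub L.ops σ₀)
    (hP : P.IsClosed) (hρ : ρ ∈ rul P) : Tr P ρ.act ρ.tgt := by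
  have hsound := (hrul P).2.2.1 ρ hρ σ₀ hσ₀ <| Rule.satisfies_of_pos_neg_eq_empty
    (hrul.pos_eq_empty hP hρ) (hrul.neg_eq_empty hP hρ) Tr σ₀
  rwa [((hrul P).2.1 ρ hρ).2.1, Tm.subst_eq_self_of_isClosed hP,
    Tm.subst_eq_self_of_isClosed (hrul.tgt_isClosed hP hρ)] at hsound

theorem exists_mem_of_tr (hrul : IsRuloidSystem L Tr rul) (hσ₀ : ClosedSub L.ops σ₀)
    (hP : P.IsClosed) {a : Act} {P' : Tm Op ar} (htr : Tr P a P') :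
    ∃ ρ ∈ rul P, ρ.act = a ∧ ρ.tgt = P' := by
  rw [← Tm.subst_eq_self_of_isClosed hP σ₀] at htr
  obtain ⟨ρ, ⟨hρ, hact⟩, σ, -, -, -, -, htgt⟩ := (hrul P).2.2.2 a σ₀ P' hσ₀ htr
  rw [Tm.subst_eq_self_of_isClosed (hrul.tgt_isClosed hP hρ)] at htgt
  exact ⟨ρ, hρ, hact, htgt⟩

end IsRuloidSystem

def RestrictClosed (R : Tm Op ar → Tm Op ar → Prop) (P Q : Tm Op ar) : Prop :=
  R P Q ∧ P.IsClosed ∧ Q.IsClosed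

theorem RestrictClosed.symm {R : Tm Op ar → Tm Op ar → Prop} (hR : ∀ ⦃P Q⦄, R P Q → R Q P)
    {P Q : Tm Op ar} (h : RestrictClosed R P Q) : RestrictClosed R Q P :=
  ⟨hR h.1, h.2.2, h.2.1⟩

section ClosedTerms

variable {L : Lang Op ar Act} {Tr : Tm Op ar → Act → Tm Op ar → Prop}
  {rul : Tm Op ar → Set (Rule Op ar Act)} {R : Tm Op ar → Tm Op ar → Prop}
  {σ₀ : ℕ → Tm Op ar}

theorem IsRMBisim.isBisim_restrictClosed (hrul : IsRuloidSystem L Tr rul)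
    (hσ₀ : ClosedSub L.ops σ₀) (hR : IsRMBisim L Tr rul R) :
    IsBisim Tr (RestrictClosed R) := by
  refine ⟨fun _ _ => RestrictClosed.symm hR.1, ?_⟩
  rintro P Q ⟨hPQ, hP, hQ⟩ a P' htr
  obtain ⟨ρ, hρ, rfl, rfl⟩ := hrul.exists_mem_of_tr hσ₀ hP htr
  obtain ⟨J, -, hJvalid, hJmatch, hJhyps⟩ := hR.2 P Q hPQ ρ hρ
  obtain ⟨ρ', hρ'J, -⟩ := hJhyps σ₀ hσ₀ <| Rule.hypsSat_of_pos_neg_eq_empty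
    (hrul.pos_eq_empty hP hρ) (hrul.neg_eq_empty hP hρ) Tr σ₀
  have hρ' : ρ' ∈ rul Q := (hrul.isValidRuloid_iff_mem hQ).1 (hJvalid ρ' hρ'J)
  obtain ⟨hact, hRtgt, -⟩ := hJmatch ρ' hρ'J
  exact ⟨ρ'.tgt, hact ▸ hrul.tr_of_mem hσ₀ hQ hρ',
    hRtgt, hrul.tgt_isClosed hP hρ, hrul.tgt_isClosed hQ hρ'⟩

theorem IsBisim.isRMBisim_restrictClosed (hrul : IsRuloidSystem L Tr rul)
    (hσ₀ : ClosedSub L.ops σ₀) (hR : IsBisim Tr R) :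
    IsRMBisim L Tr rul (RestrictClosed R) := by
  refine ⟨fun _ _ => RestrictClosed.symm hR.1, ?_⟩
  rintro P Q ⟨hPQ, hP, hQ⟩ ρ hρ
  obtain ⟨Q', htr, hRQ'⟩ := hR.2 P Q hPQ _ _ (hrul.tr_of_mem hσ₀ hP hρ)
  obtain ⟨ρ', hρ', hact, rfl⟩ := hrul.exists_mem_of_tr hσ₀ hQ htr
  refine ⟨{ρ'}, Set.finite_singleton ρ', ?_, ?_, ?_⟩
  · rintro _ rfl
    exact (hrul.isValidRuloid_iff_mem hQ).2 hρ'
  · rintro _ rfl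
    refine ⟨hact, ⟨hRQ', hrul.tgt_isClosed hP hρ, hrul.tgt_isClosed hQ hρ'⟩, ?_, ?_⟩
    · simp [hrul.sourceVars_eq_empty hP hρ, hrul.sourceVars_eq_empty hQ hρ']
    · intro y hy
      simp [hrul.targetVars_eq_empty hP hρ] at hy
  · exact fun σ _ _ => ⟨ρ', rfl, Rule.hypsSat_of_pos_neg_eq_empty
      (hrul.pos_eq_empty hQ hρ') (hrul.neg_eq_empty hQ hρ') Tr σ⟩

end ClosedTerms

theorem rm_bisim_closed_terms_general {Op : Type} {ar : Op → ℕ} {Act : Type}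
    (L : Lang Op ar Act)
    (Tr : Tm Op ar → Act → Tm Op ar → Prop)
    (rul : Tm Op ar → Set (Rule Op ar Act))
    (hrul : IsRuloidSystem L Tr rul)
    (p q : Tm Op ar) (hp : p.IsClosed) (hq : q.IsClosed)
    (hpo : p.ops ⊆ L.ops) :
    RMBisim L Tr rul p q ↔ Bisim Tr p q := by
  have hσ₀ : ClosedSub L.ops fun _ => p := fun _ => ⟨hp, hpo⟩
  constructor
  · rintro ⟨R, hR, hpq⟩
    exact ⟨_, hR.isBisim_restrictClosed hrul hσ₀, hpq, hp, hq⟩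
  · rintro ⟨R, hR, hpq⟩
    exact ⟨_, hR.isRMBisim_restrictClosed hrul hσ₀, hpq, hp, hq⟩

/-- over closed terms, rule-matching bisimilarity coincides with
bisimilarity. -/
theorem rm_bisim_closed_terms {Op : Type} {ar : Op → ℕ} {Act : Type}
    [Finite Act] [Nonempty Act]
    (L : Lang Op ar Act) (hL : L.WellFormed)
    (Tr : Tm Op ar → Act → Tm Op ar → Prop) (hTr : IsTransRel L Tr)
    (hnj : ∀ ρ ∈ L.rules, ¬ IsJunk L Tr ρ)
    (rul : Tm Op ar → Set (Rule Op ar Act))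
    (hrul : IsRuloidSystem L Tr rul) (hjf : JunkFree L Tr rul)
    (p q : Tm Op ar) (hp : p.IsClosed) (hq : q.IsClosed)
    (hpo : p.ops ⊆ L.ops) (hqo : q.ops ⊆ L.ops) :
    RMBisim L Tr rul p q ↔ Bisim Tr p q :=
  rm_bisim_closed_terms_general L Tr rul hrul p q hp hq hpo

end GSOSPaper
end

section
/- (Associativity of sequencing) Let G be any GSOS language containing the binary sequencing operation ';' specified, for each action a ∈ Act, by the rules x →^a z / x;y →^a z;y and {x ↛^b (for all b ∈ Act), y →^a z} / x;y →^a z. Then Algbis(G) ⊨ (x;y);z = x;(y;z); in particular, for all closed Σ_G-terms p, q, r: (p;q);r ↔_G p;(q;r). -/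
/-!
Common infrastructure for formalizing results about GSOS languages
("A rule-matching bisimulation method", Aceto et al.).

* Variables are natural numbers (a countably infinite set).
* Terms over a signature given by a type `Op` of operation symbols with
  arities `ar : Op → ℕ`.
* GSOS rules and ruloids, the induced (sound and supported) transition
  relation, bisimilarity, ruloid systems, valid ruloids, initial transition
  formulae and rule-matching bisimulation.
-/

namespace GSOSPaper

variable {Op : Type} {ar : Op → ℕ} {Act : Type}

/-- The sequencing rule `x →^a z / x ; y →^a z ; y`. -/
def seqRule1 (sq : Op) (a : Act) : Rule Op ar Act :=
  ⟨{(0, a, 2)}, ∅, binT sq (.var 0) (.var 1), a, binT sq (.var 2) (.var 1)⟩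

/-- The sequencing rule `x ↛^b (∀ b ∈ Act), y →^a z / x ; y →^a z`. -/
def seqRule2 (sq : Op) (a : Act) : Rule Op ar Act :=
  ⟨{(1, a, 2)}, {p : ℕ × Act | p.1 = 0}, binT sq (.var 0) (.var 1), a, .var 2⟩

/-!
A move of `(p;q);r` either comes from a move `p → p'`, giving `(p';q);r`, or, when `p` is
stuck, is a move of `q;r`, because `p;q` is stuck exactly when `p` and `q` are. The moves of
`p;(q;r)` have the same two shapes, with `p';(q;r)` in the first. So the pairs
`((p;q);r, p;(q;r))` of closed terms, together with the identity, form a bisimulation.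
-/

/-- `ClosedSub S σ` unfolds to `∀ x, (σ x).IsClosedOver S`. -/
def Tm.IsClosedOver (S : Set Op) (t : Tm Op ar) : Prop := t.IsClosed ∧ t.ops ⊆ S

def Stuck (Tr : Tm Op ar → Act → Tm Op ar → Prop) (p : Tm Op ar) : Prop := ∀ a q, ¬ Tr p a q

lemma subst_binT (f : Op) (t u : Tm Op ar) (σ : ℕ → Tm Op ar) :
    (binT f t u).subst σ = binT f (t.subst σ) (u.subst σ) := by
  simp only [binT, Tm.subst]
  congr 1
  funext i
  split <;> rfl

lemma binT_inj {f : Op} (har : ar f = 2) {t u t' u' : Tm Op ar} :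
    binT f t u = binT f t' u' ↔ t = t' ∧ u = u' := by
  refine ⟨fun h => ?_, fun ⟨ht, hu⟩ => ht ▸ hu ▸ rfl⟩
  simp only [binT, Tm.app.injEq, heq_eq_eq, true_and] at h
  exact ⟨by simpa using congrFun h ⟨0, by omega⟩, by simpa using congrFun h ⟨1, by omega⟩⟩

lemma Tm.IsClosedOver.binT {S : Set Op} {f : Op} (hf : f ∈ S) {t u : Tm Op ar}
    (ht : t.IsClosedOver S) (hu : u.IsClosedOver S) : (binT f t u).IsClosedOver S := by
  simp only [Tm.IsClosedOver, GSOSPaper.binT, Tm.IsClosed, Tm.vars, Tm.ops,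
    Set.iUnion_eq_empty, Set.insert_subset_iff, Set.iUnion_subset_iff]
  exact ⟨fun i => by split; exacts [ht.1, hu.1], hf, fun i => by split; exacts [ht.2, hu.2]⟩

lemma Tm.isClosedOver_subst {S : Set Op} {σ : ℕ → Tm Op ar} (hσ : ClosedSub S σ)
    {t : Tm Op ar} (ht : t.ops ⊆ S) : (t.subst σ).IsClosedOver S := by
  induction t with
  | var x => exact hσ x
  | app f ts ih =>
    simp only [Tm.ops, Set.insert_subset_iff, Set.iUnion_subset_iff] at ht
    simp only [Tm.IsClosedOver, Tm.subst, Tm.IsClosed, Tm.vars, Tm.ops, Set.iUnion_eq_empty,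
      Set.insert_subset_iff, Set.iUnion_subset_iff]
    exact ⟨fun i => (ih i (ht.2 i)).1, ht.1, fun i => (ih i (ht.2 i)).2⟩

lemma closedSub_three {S : Set Op} {t u v : Tm Op ar} (ht : t.IsClosedOver S)
    (hu : u.IsClosedOver S) (hv : v.IsClosedOver S) :
    ClosedSub S fun n => if n = 0 then t else if n = 1 then u else v := by
  intro n
  dsimp only
  split_ifs
  exacts [ht, hu, hv]

section Transitions

variable {L : Lang Op ar Act} {Tr : Tm Op ar → Act → Tm Op ar → Prop}

lemma IsTransRel.isClosedOver_of_tr (hTr : IsTransRel L Tr) (hL : L.WellFormed)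
    {p q : Tm Op ar} {a : Act} (h : Tr p a q) : q.IsClosedOver L.ops := by
  obtain ⟨ρ, hρ, σ, hσ, -, -, -, rfl⟩ := hTr.2 _ _ _ h
  exact Tm.isClosedOver_subst hσ (hL.2.2 ρ hρ).2.2

variable {sq : Op} {t u t' v : Tm Op ar} {a : Act}

lemma IsTransRel.tr_seq_of_tr_left (hTr : IsTransRel L Tr) (hmem : seqRule1 sq a ∈ L.rules)
    (ht : t.IsClosedOver L.ops) (hu : u.IsClosedOver L.ops) (ht' : t'.IsClosedOver L.ops)
    (h : Tr t a t') : Tr (binT sq t u) a (binT sq t' u) := by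
  have := hTr.1 _ hmem _ (closedSub_three ht hu ht') ⟨?_, fun _ _ h => absurd h (by simp [seqRule1])⟩
  · simpa [seqRule1, subst_binT, Tm.subst] using this
  · rintro x b y hxy
    simp only [seqRule1, Set.mem_singleton_iff, Prod.mk.injEq] at hxy
    obtain ⟨rfl, rfl, rfl⟩ := hxy
    simpa using h

lemma IsTransRel.tr_seq_of_stuck (hTr : IsTransRel L Tr) (hmem : seqRule2 sq a ∈ L.rules)
    (ht : t.IsClosedOver L.ops) (hu : u.IsClosedOver L.ops) (hv : v.IsClosedOver L.ops)
    (hstuck : Stuck Tr t) (h : Tr u a v) : Tr (binT sq t u) a v := by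
  have := hTr.1 _ hmem _ (closedSub_three ht hu hv) ⟨?_, ?_⟩
  · simpa [seqRule2, subst_binT, Tm.subst] using this
  · rintro x b y hxy
    simp only [seqRule2, Set.mem_singleton_iff, Prod.mk.injEq] at hxy
    obtain ⟨rfl, rfl, rfl⟩ := hxy
    simpa using h
  · rintro x b (rfl : x = 0)
    simpa using hstuck b

lemma IsTransRel.tr_seq_cases (hTr : IsTransRel L Tr) (hL : L.WellFormed) (har : ar sq = 2)
    (honly : ∀ ρ ∈ L.rules, ρ.PrincipalIs sq → ∃ a : Act, ρ = seqRule1 sq a ∨ ρ = seqRule2 sq a)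
    (h : Tr (binT sq t u) a v) :
    (∃ t', Tr t a t' ∧ v = binT sq t' u) ∨ (Stuck Tr t ∧ Tr u a v) := by
  obtain ⟨ρ, hρ, σ, -, hsat, hsrc, rfl, rfl⟩ := hTr.2 _ _ _ h
  have hprincipal : ρ.PrincipalIs sq := by
    obtain ⟨f, x, -, hform⟩ := (hL.2.2 ρ hρ).1.2
    rw [hform] at hsrc
    simp only [Tm.subst, binT, Tm.app.injEq] at hsrc
    exact hsrc.1 ▸ ⟨_, hform⟩
  obtain ⟨b, rfl | rfl⟩ := honly ρ hρ hprincipal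
  · obtain ⟨rfl, rfl⟩ := (binT_inj har).1 (by simpa [seqRule1, subst_binT] using hsrc)
    exact Or.inl ⟨σ 2, hsat.1 rfl, by simp [seqRule1, subst_binT, Tm.subst]⟩
  · obtain ⟨rfl, rfl⟩ := (binT_inj har).1 (by simpa [seqRule2, subst_binT] using hsrc)
    exact Or.inr ⟨fun c w => hsat.2 (rfl : ((0, c) : ℕ × Act).1 = 0) w, hsat.1 rfl⟩

lemma IsTransRel.tr_seq_iff (hTr : IsTransRel L Tr) (hL : L.WellFormed) (har : ar sq = 2)
    (hmem : ∀ a : Act, seqRule1 sq a ∈ L.rules ∧ seqRule2 sq a ∈ L.rules)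
    (honly : ∀ ρ ∈ L.rules, ρ.PrincipalIs sq → ∃ a : Act, ρ = seqRule1 sq a ∨ ρ = seqRule2 sq a)
    (ht : t.IsClosedOver L.ops) (hu : u.IsClosedOver L.ops) :
    Tr (binT sq t u) a v ↔ (∃ t', Tr t a t' ∧ v = binT sq t' u) ∨ (Stuck Tr t ∧ Tr u a v) := by
  refine ⟨hTr.tr_seq_cases hL har honly, ?_⟩
  rintro (⟨t', h, rfl⟩ | ⟨hstuck, h⟩)
  · exact hTr.tr_seq_of_tr_left (hmem a).1 ht hu (hTr.isClosedOver_of_tr hL h) h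
  · exact hTr.tr_seq_of_stuck (hmem a).2 ht hu (hTr.isClosedOver_of_tr hL h) hstuck h

lemma IsTransRel.stuck_seq_iff (hTr : IsTransRel L Tr) (hL : L.WellFormed) (har : ar sq = 2)
    (hmem : ∀ a : Act, seqRule1 sq a ∈ L.rules ∧ seqRule2 sq a ∈ L.rules)
    (honly : ∀ ρ ∈ L.rules, ρ.PrincipalIs sq → ∃ a : Act, ρ = seqRule1 sq a ∨ ρ = seqRule2 sq a)
    (ht : t.IsClosedOver L.ops) (hu : u.IsClosedOver L.ops) :
    Stuck Tr (binT sq t u) ↔ Stuck Tr t ∧ Stuck Tr u := by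
  simp only [Stuck, hTr.tr_seq_iff hL har hmem honly ht hu, not_or, not_exists, not_and]
  refine ⟨fun h => ⟨fun a t' ht' => (h a _).1 t' ht' rfl, fun a v hv => ?_⟩,
    fun ⟨ht', hu'⟩ a v => ⟨fun t'' h _ => ht' a t'' h, fun _ => hu' a v⟩⟩
  exact (h a v).2 (fun b t' ht' => (h b _).1 t' ht' rfl) hv

lemma IsTransRel.tr_seq_seq_iff (hTr : IsTransRel L Tr) (hL : L.WellFormed) (hsq : sq ∈ L.ops)
    (har : ar sq = 2) (hmem : ∀ a : Act, seqRule1 sq a ∈ L.rules ∧ seqRule2 sq a ∈ L.rules)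
    (honly : ∀ ρ ∈ L.rules, ρ.PrincipalIs sq → ∃ a : Act, ρ = seqRule1 sq a ∨ ρ = seqRule2 sq a)
    {p q r : Tm Op ar} (hp : p.IsClosedOver L.ops) (hq : q.IsClosedOver L.ops)
    (hr : r.IsClosedOver L.ops) :
    Tr (binT sq (binT sq p q) r) a v ↔
      (∃ p', Tr p a p' ∧ v = binT sq (binT sq p' q) r) ∨ (Stuck Tr p ∧ Tr (binT sq q r) a v) := by
  simp only [hTr.tr_seq_iff hL har hmem honly (hp.binT hsq hq) hr,
    hTr.tr_seq_iff hL har hmem honly hp hq, hTr.tr_seq_iff hL har hmem honly hq hr,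
    hTr.stuck_seq_iff hL har hmem honly hp hq]
  aesop

end Transitions

lemma bisim_of_forth_back {Tr : Tm Op ar → Act → Tm Op ar → Prop} {R : Tm Op ar → Tm Op ar → Prop}
    (forth : ∀ p q, R p q → ∀ a p', Tr p a p' → ∃ q', Tr q a q' ∧ (p' = q' ∨ R p' q'))
    (back : ∀ p q, R p q → ∀ a q', Tr q a q' → ∃ p', Tr p a p' ∧ (p' = q' ∨ R p' q'))
    {p q : Tm Op ar} (h : R p q) : Bisim Tr p q := by
  refine ⟨fun p q => p = q ∨ R p q ∨ R q p, ⟨?_, ?_⟩, Or.inr (Or.inl h)⟩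
  · rintro p q (rfl | h | h)
    exacts [Or.inl rfl, Or.inr (Or.inr h), Or.inr (Or.inl h)]
  · rintro p q (rfl | h | h) a p' hp'
    · exact ⟨p', hp', Or.inl rfl⟩
    · obtain ⟨q', hq', h'⟩ := forth p q h a p' hp'
      exact ⟨q', hq', h'.imp_right Or.inl⟩
    · obtain ⟨q', hq', h'⟩ := back q p h a p' hp'
      exact ⟨q', hq', h'.imp Eq.symm Or.inr⟩

lemma bisim_seq_assoc {L : Lang Op ar Act} {Tr : Tm Op ar → Act → Tm Op ar → Prop}
    (hTr : IsTransRel L Tr) (hL : L.WellFormed) {sq : Op} (hsq : sq ∈ L.ops) (har : ar sq = 2)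
    (hmem : ∀ a : Act, seqRule1 sq a ∈ L.rules ∧ seqRule2 sq a ∈ L.rules)
    (honly : ∀ ρ ∈ L.rules, ρ.PrincipalIs sq → ∃ a : Act, ρ = seqRule1 sq a ∨ ρ = seqRule2 sq a)
    {p q r : Tm Op ar} (hp : p.IsClosedOver L.ops) (hq : q.IsClosedOver L.ops)
    (hr : r.IsClosedOver L.ops) :
    Bisim Tr (binT sq (binT sq p q) r) (binT sq p (binT sq q r)) := by
  have left_iff := fun {p q r v : Tm Op ar} {a : Act} =>
    hTr.tr_seq_seq_iff (p := p) (q := q) (r := r) (v := v) (a := a) hL hsq har hmem honly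
  have right_iff := fun {p q r v : Tm Op ar} {a : Act} (hp : p.IsClosedOver L.ops)
      (hq : q.IsClosedOver L.ops) (hr : r.IsClosedOver L.ops) =>
    hTr.tr_seq_iff (a := a) (v := v) hL har hmem honly hp (hq.binT hsq hr)
  refine bisim_of_forth_back (R := fun P Q => ∃ p q r : Tm Op ar, p.IsClosedOver L.ops ∧
      q.IsClosedOver L.ops ∧ r.IsClosedOver L.ops ∧
      P = binT sq (binT sq p q) r ∧ Q = binT sq p (binT sq q r)) ?_ ?_ ⟨p, q, r, hp, hq, hr, rfl, rfl⟩
  · rintro _ _ ⟨p, q, r, hp, hq, hr, rfl, rfl⟩ a P' h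
    rcases (left_iff hp hq hr).1 h with ⟨p', hp', rfl⟩ | hstuck
    · exact ⟨_, (right_iff hp hq hr).2 (Or.inl ⟨p', hp', rfl⟩),
        Or.inr ⟨p', q, r, hTr.isClosedOver_of_tr hL hp', hq, hr, rfl, rfl⟩⟩
    · exact ⟨P', (right_iff hp hq hr).2 (Or.inr hstuck), Or.inl rfl⟩
  · rintro _ _ ⟨p, q, r, hp, hq, hr, rfl, rfl⟩ a Q' h
    rcases (right_iff hp hq hr).1 h with ⟨p', hp', rfl⟩ | hstuck
    · exact ⟨_, (left_iff hp hq hr).2 (Or.inl ⟨p', hp', rfl⟩),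
        Or.inr ⟨p', q, r, hTr.isClosedOver_of_tr hL hp', hq, hr, rfl, rfl⟩⟩
    · exact ⟨Q', (left_iff hp hq hr).2 (Or.inr hstuck), Or.inl rfl⟩

theorem sequencing_assoc_general {Op : Type} {ar : Op → ℕ} {Act : Type}
    (L : Lang Op ar Act) (hL : L.WellFormed)
    (Tr : Tm Op ar → Act → Tm Op ar → Prop) (hTr : IsTransRel L Tr)
    (sq : Op) (hsq : sq ∈ L.ops) (har : ar sq = 2)
    (hmem : ∀ a : Act, seqRule1 sq a ∈ L.rules ∧ seqRule2 sq a ∈ L.rules)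
    (honly : ∀ ρ ∈ L.rules, ρ.PrincipalIs sq →
      ∃ a : Act, ρ = seqRule1 sq a ∨ ρ = seqRule2 sq a) :
    (∀ σ, ClosedSub L.ops σ →
      Bisim Tr ((binT sq (binT sq (.var 0) (.var 1)) (.var 2)).subst σ)
        ((binT sq (.var 0) (binT sq (.var 1) (.var 2))).subst σ)) ∧
    (∀ p q r : Tm Op ar,
      p.IsClosed → p.ops ⊆ L.ops → q.IsClosed → q.ops ⊆ L.ops →
      r.IsClosed → r.ops ⊆ L.ops →
      Bisim Tr (binT sq (binT sq p q) r) (binT sq p (binT sq q r))) := by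
  have assoc := fun {p q r : Tm Op ar} => bisim_seq_assoc (p := p) (q := q) (r := r)
    hTr hL hsq har hmem honly
  refine ⟨fun σ hσ => ?_, fun p q r hp hp' hq hq' hr hr' => assoc ⟨hp, hp'⟩ ⟨hq, hq'⟩ ⟨hr, hr'⟩⟩
  simp only [subst_binT]
  exact assoc (hσ 0) (hσ 1) (hσ 2)

/-- Associativity of sequencing: in any GSOS language
containing the sequencing operation, `Algbis(G) ⊨ (x;y);z = x;(y;z)`; in
particular `(p;q);r ↔ p;(q;r)` for all closed `Σ_G`-terms `p`, `q`, `r`. -/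
theorem sequencing_assoc {Op : Type} {ar : Op → ℕ} {Act : Type}
    [Finite Act] [Nonempty Act]
    (L : Lang Op ar Act) (hL : L.WellFormed)
    (Tr : Tm Op ar → Act → Tm Op ar → Prop) (hTr : IsTransRel L Tr)
    (sq : Op) (hsq : sq ∈ L.ops) (har : ar sq = 2)
    (hmem : ∀ a : Act, seqRule1 sq a ∈ L.rules ∧ seqRule2 sq a ∈ L.rules)
    (honly : ∀ ρ ∈ L.rules, ρ.PrincipalIs sq →
      ∃ a : Act, ρ = seqRule1 sq a ∨ ρ = seqRule2 sq a) :
    (∀ σ, ClosedSub L.ops σ →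
      Bisim Tr ((binT sq (binT sq (.var 0) (.var 1)) (.var 2)).subst σ)
        ((binT sq (.var 0) (binT sq (.var 1) (.var 2))).subst σ)) ∧
    (∀ p q r : Tm Op ar,
      p.IsClosed → p.ops ⊆ L.ops → q.IsClosed → q.ops ⊆ L.ops →
      r.IsClosed → r.ops ⊆ L.ops →
      Bisim Tr (binT sq (binT sq p q) r) (binT sq p (binT sq q r))) :=
  sequencing_assoc_general L hL Tr hTr sq hsq har hmem honly

end GSOSPaper
end
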